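/- arXiv:2207.13449 — 5 statements merged into one kernel-verified Lean document; each statement's English description precedes it below -/
import Mathlib

section
/- Let a ∈ (0,∞], I = [0,a), let F₁ and F₂ be admissible on I, and let Ω be a convex domain in ℝⁿ (n ≥ 1). Then C_Ω[F₂] ⊆ C_Ω[F₁] (i.e., every F₂-concave function in Ω is F₁-concave in Ω) if and only if the composition F₁ ∘ f_{F₂} is concave on J_{F₂}. -/
open Set Filter
open scoped ENNReal Topology

noncomputable section

/-- The interval `I = [0,a)` for `a ∈ (0,∞]`, as a subset of `ℝ`. -/
def intervalI (a : ℝ≥0∞) : Set ℝ := {r : ℝ | 0 ≤ r ∧ ENNReal.ofReal r < a}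

/-- The interior `(0,a)` of `I = [0,a)`. -/
def intervalI₀ (a : ℝ≥0∞) : Set ℝ := {r : ℝ | 0 < r ∧ ENNReal.ofReal r < a}

/-- `F : I → [-∞,∞)` is admissible on `I = [0,a)`: continuous on `(0,a)`,
strictly increasing on `I`, `F(0) = -∞`, and never `+∞` on `I`. -/
structure IsAdmissible (a : ℝ≥0∞) (F : ℝ → EReal) : Prop where
  continuousOn : ContinuousOn F (intervalI₀ a)
  strictMonoOn : StrictMonoOn F (intervalI a)
  map_zero : F 0 = ⊥
  lt_top : ∀ r ∈ intervalI a, F r < ⊤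

/-- `f` is `F`-concave on `Ω`:
`F(f((1-λ)x+λy)) ≥ (1-λ)F(f(x)) + λF(f(y))` for `x,y ∈ Ω`, `λ ∈ (0,1)`. -/
def FConcaveOn {E : Type*} [AddCommGroup E] [Module ℝ E]
    (F : ℝ → EReal) (Ω : Set E) (f : E → ℝ) : Prop :=
  ∀ x ∈ Ω, ∀ y ∈ Ω, ∀ lam : ℝ, lam ∈ Ioo (0:ℝ) 1 →
    ((1 - lam : ℝ) : EReal) * F (f x) + (lam : EReal) * F (f y)
      ≤ F (f ((1 - lam) • x + lam • y))

/-- `C_Ω[F]`: the set of `F`-concave functions on `Ω` with values in `I = [0,a)`. -/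
def CSet {E : Type*} [AddCommGroup E] [Module ℝ E]
    (a : ℝ≥0∞) (F : ℝ → EReal) (Ω : Set E) : Set (E → ℝ) :=
  {f | MapsTo f Ω (intervalI a) ∧ FConcaveOn F Ω f}

lemma intervalI₀_subset (a : ℝ≥0∞) : intervalI₀ a ⊆ intervalI a :=
  fun _ hr => ⟨hr.1.le, hr.2⟩

lemma zero_mem_intervalI {a : ℝ≥0∞} (ha : 0 < a) : (0:ℝ) ∈ intervalI a :=
  ⟨le_rfl, by simpa using ha⟩

lemma IsAdmissible.ne_bot' {a : ℝ≥0∞} {F : ℝ → EReal} (hF : IsAdmissible a F) (ha : 0 < a)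
    {r : ℝ} (hr : r ∈ intervalI₀ a) : F r ≠ ⊥ := by
  have h := hF.strictMonoOn (zero_mem_intervalI ha) (intervalI₀_subset a hr) hr.1
  rw [hF.map_zero] at h
  exact h.ne'

lemma IsAdmissible.ne_top' {a : ℝ≥0∞} {F : ℝ → EReal} (hF : IsAdmissible a F)
    {r : ℝ} (hr : r ∈ intervalI₀ a) : F r ≠ ⊤ :=
  (hF.lt_top r (intervalI₀_subset a hr)).ne

lemma mem_intervalI₀ {a : ℝ≥0∞} {r : ℝ} (hr : r ∈ intervalI a) (h0 : r ≠ 0) :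
    r ∈ intervalI₀ a := ⟨lt_of_le_of_ne hr.1 (Ne.symm h0), hr.2⟩

set_option maxHeartbeats 1000000 in
/-- `C_Ω[F₂] ⊆ C_Ω[F₁]` iff `F₁ ∘ f_{F₂}` is concave on `J_{F₂}`.
Here `g` plays the role of `f_{F₂}` (the inverse of `F₂` on `(0,a)`), and
`J_{F₂} = F₂((0,a))` is realized as the image of `(0,a)` under `r ↦ (F₂ r).toReal`
(the values of `F₂` on `(0,a)` are finite). -/
theorem stmt0 {n : ℕ} (hn : 1 ≤ n) (a : ℝ≥0∞) (ha : 0 < a)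
    (F₁ F₂ : ℝ → EReal) (hF₁ : IsAdmissible a F₁) (hF₂ : IsAdmissible a F₂)
    (Ω : Set (EuclideanSpace ℝ (Fin n)))
    (hΩconv : Convex ℝ Ω) (hΩopen : IsOpen Ω) (hΩne : Ω.Nonempty)
    (g : ℝ → ℝ) (hg : ∀ r ∈ intervalI₀ a, g ((F₂ r).toReal) = r) :
    CSet a F₂ Ω ⊆ CSet a F₁ Ω ↔
      ConcaveOn ℝ ((fun r => (F₂ r).toReal) '' intervalI₀ a)
        (fun z => (F₁ (g z)).toReal) := by
  classical
  set φ : ℝ → ℝ := fun r => (F₂ r).toReal with hφdef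
  set J : Set ℝ := φ '' intervalI₀ a with hJdef
  have hI₀I := intervalI₀_subset a
  have h2b : ∀ {r : ℝ}, r ∈ intervalI₀ a → F₂ r ≠ ⊥ := fun hr => hF₂.ne_bot' ha hr
  have h2t : ∀ {r : ℝ}, r ∈ intervalI₀ a → F₂ r ≠ ⊤ := fun hr => hF₂.ne_top' hr
  have h1b : ∀ {r : ℝ}, r ∈ intervalI₀ a → F₁ r ≠ ⊥ := fun hr => hF₁.ne_bot' ha hr
  have h1t : ∀ {r : ℝ}, r ∈ intervalI₀ a → F₁ r ≠ ⊤ := fun hr => hF₁.ne_top' hr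
  have hmemJ : ∀ {z : ℝ}, z ∈ J → g z ∈ intervalI₀ a ∧ F₂ (g z) = (z : EReal) := by
    rintro z ⟨r, hr, rfl⟩
    rw [show g (φ r) = r from hg r hr]
    exact ⟨hr, (EReal.coe_toReal (h2t hr) (h2b hr)).symm⟩
  -- convexity of J
  have hI₀conv : Convex ℝ (intervalI₀ a) := by
    rw [convex_iff_ordConnected]
    exact ⟨fun r hr r' hr' z hz => ⟨lt_of_lt_of_le hr.1 hz.1,
      lt_of_le_of_lt (ENNReal.ofReal_le_ofReal hz.2) hr'.2⟩⟩
  have hcont : ContinuousOn φ (intervalI₀ a) := by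
    apply EReal.continuousOn_toReal.comp hF₂.continuousOn
    intro r hr
    simp only [mem_compl_iff, mem_insert_iff, mem_singleton_iff]
    push_neg
    exact ⟨h2b hr, h2t hr⟩
  have hJconv : Convex ℝ J := by
    rw [convex_iff_ordConnected, ← isPreconnected_iff_ordConnected]
    exact (hI₀conv.isPreconnected).image φ hcont
  have hord : OrdConnected J := convex_iff_ordConnected.1 hJconv
  -- monotonicity of F₁ ∘ g on J
  have hmono : ∀ {p q : ℝ}, p ∈ J → q ∈ J → p ≤ q →
      (F₁ (g p)).toReal ≤ (F₁ (g q)).toReal := by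
    intro p q hp hq hpq
    obtain ⟨hp0, hpF⟩ := hmemJ hp
    obtain ⟨hq0, hqF⟩ := hmemJ hq
    have hgpq : g p ≤ g q := by
      by_contra hlt
      push_neg at hlt
      have h := hF₂.strictMonoOn (hI₀I hq0) (hI₀I hp0) hlt
      rw [hpF, hqF] at h
      exact absurd (EReal.coe_lt_coe_iff.1 h) (not_lt.2 hpq)
    have hF1le : F₁ (g p) ≤ F₁ (g q) := by
      rcases eq_or_lt_of_le hgpq with h|h
      · rw [h]
      · exact (hF₁.strictMonoOn (hI₀I hp0) (hI₀I hq0) h).le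
    exact EReal.toReal_le_toReal hF1le (h1b hp0) (h1t hq0)
  constructor
  · -- forward direction
    intro hCsub
    refine ⟨hJconv, ?_⟩
    intro s hs t ht la mu hla hmu hlamu
    rcases eq_or_lt_of_le hla with h0|hla'
    · have hmu1 : mu = 1 := by linarith
      simp [← h0, hmu1]
    rcases eq_or_lt_of_le hmu with h0|hmu'
    · have hla1 : la = 1 := by linarith
      simp [← h0, hla1]
    have hla_eq : la = 1 - mu := by linarith
    have hmu1 : mu < 1 := by linarith
    -- set up geometry
    obtain ⟨x₀, hx₀⟩ := hΩne
    obtain ⟨ε, hε, hball⟩ := Metric.isOpen_iff.1 hΩopen x₀ hx₀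
    set i0 : Fin n := ⟨0, hn⟩ with hi0
    set e : EuclideanSpace ℝ (Fin n) := EuclideanSpace.single i0 (1:ℝ) with he
    have hne : ‖e‖ = 1 := by simp [he, EuclideanSpace.norm_single]
    have hei0 : e i0 = 1 := by simp [he, EuclideanSpace.single_apply]
    set x : EuclideanSpace ℝ (Fin n) := x₀ - (ε/2) • e with hx
    set y : EuclideanSpace ℝ (Fin n) := x₀ + (ε/2) • e with hy
    have hxΩ : x ∈ Ω := by
      apply hball
      rw [Metric.mem_ball, dist_eq_norm]
      have : x - x₀ = -((ε/2) • e) := by rw [hx]; abel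
      rw [this, norm_neg, norm_smul, hne, Real.norm_eq_abs, abs_of_pos (by linarith)]
      linarith
    have hyΩ : y ∈ Ω := by
      apply hball
      rw [Metric.mem_ball, dist_eq_norm]
      have : y - x₀ = (ε/2) • e := by rw [hy]; abel
      rw [this, norm_smul, hne, Real.norm_eq_abs, abs_of_pos (by linarith)]
      linarith
    have hxi0 : x i0 = x₀ i0 - ε/2 := by
      simp [hx, PiLp.sub_apply, PiLp.smul_apply, hei0]
    have hyi0 : y i0 = x₀ i0 + ε/2 := by
      simp [hy, PiLp.add_apply, PiLp.smul_apply, hei0]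
    set L : EuclideanSpace ℝ (Fin n) → ℝ :=
      fun z => (s+t)/2 + (z i0 - x₀ i0) * ((t-s)/ε) with hL
    have hLaff : ∀ (p q : EuclideanSpace ℝ (Fin n)) (μ : ℝ),
        L ((1-μ) • p + μ • q) = (1-μ) * L p + μ * L q := by
      intro p q μ
      simp only [hL, PiLp.add_apply, PiLp.smul_apply, smul_eq_mul]
      ring
    have hLx : L x = s := by
      simp only [hL, hxi0]
      field_simp
      ring
    have hLy : L y = t := by
      simp only [hL, hyi0]
      field_simp
      ring
    set M : ℝ := max s t with hM
    have hMJ : M ∈ J := by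
      rcases le_total s t with h|h
      · rw [hM, max_eq_right h]; exact ht
      · rw [hM, max_eq_left h]; exact hs
    set c : EuclideanSpace ℝ (Fin n) → ℝ := fun z => min (L z) M with hc
    set f : EuclideanSpace ℝ (Fin n) → ℝ :=
      fun z => if c z ∈ J then g (c z) else 0 with hf
    have hfI : MapsTo f Ω (intervalI a) := by
      intro z _
      by_cases h : c z ∈ J
      · rw [hf]; simp only [if_pos h]; exact hI₀I (hmemJ h).1
      · rw [hf]; simp only [if_neg h]; exact zero_mem_intervalI ha
    have hF₂f : ∀ z, F₂ (f z) = if c z ∈ J then ((c z : ℝ) : EReal) else ⊥ := by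
      intro z
      by_cases h : c z ∈ J
      · rw [hf]; simp only [if_pos h]; exact (hmemJ h).2
      · rw [hf]; simp only [if_neg h]; exact hF₂.map_zero
    have hf2 : FConcaveOn F₂ Ω f := by
      intro p hp q hq μ hμ
      rw [hF₂f, hF₂f, hF₂f]
      by_cases hcp : c p ∈ J
      · by_cases hcq : c q ∈ J
        · have hcomboJ : (1-μ)*c p + μ*c q ∈ J := by
            have := hJconv hcp hcq (by linarith [hμ.2] : (0:ℝ) ≤ 1 - μ) hμ.1.le (by ring)
            simpa [smul_eq_mul] using this
          have h3 : c p ≤ M := min_le_right _ _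
          have h4 : c q ≤ M := min_le_right _ _
          have hcmid_ge : (1-μ)*c p + μ*c q ≤ c ((1-μ) • p + μ • q) := by
            have h1 : c p ≤ L p := min_le_left _ _
            have h2 : c q ≤ L q := min_le_left _ _
            have h5 := hLaff p q μ
            apply le_min
            · rw [h5]
              nlinarith [hμ.1, hμ.2]
            · nlinarith [hμ.1, hμ.2]
          have hcmidJ : c ((1-μ) • p + μ • q) ∈ J :=
            hord.out hcomboJ hMJ ⟨hcmid_ge, min_le_right _ _⟩
          rw [if_pos hcp, if_pos hcq, if_pos hcmidJ, ← EReal.coe_mul, ← EReal.coe_mul,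
            ← EReal.coe_add, EReal.coe_le_coe_iff]
          exact hcmid_ge
        · rw [if_neg hcq]
          have hb : (μ : EReal) * ⊥ = ⊥ := EReal.coe_mul_bot_of_pos hμ.1
          rw [hb, EReal.add_bot]
          exact bot_le
      · rw [if_neg hcp]
        have hb : ((1-μ : ℝ) : EReal) * ⊥ = ⊥ :=
          EReal.coe_mul_bot_of_pos (by linarith [hμ.2])
        rw [hb, EReal.bot_add]
        exact bot_le
    have hfC₁ : FConcaveOn F₁ Ω f := (hCsub ⟨hfI, hf2⟩).2
    -- evaluate at x, y
    have hsM : s ≤ M := le_max_left _ _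
    have htM : t ≤ M := le_max_right _ _
    have hcx : c x = s := by rw [hc]; simp only [hLx]; exact min_eq_left hsM
    have hcy : c y = t := by rw [hc]; simp only [hLy]; exact min_eq_left htM
    set μ₀ : ℝ := (1-mu)*s + mu*t with hμ₀
    have hμ₀J : μ₀ ∈ J := by
      have := hJconv hs ht (by linarith : (0:ℝ) ≤ 1 - mu) hmu'.le (by ring)
      simpa [smul_eq_mul, hμ₀] using this
    have hcmid : c ((1-mu) • x + mu • y) = μ₀ := by
      rw [hc]
      simp only [hLaff x y mu, hLx, hLy]
      refine min_eq_left ?_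
      nlinarith [hsM, htM]
    have hfx : f x = g s := by rw [hf]; simp only [hcx, if_pos hs]
    have hfy : f y = g t := by rw [hf]; simp only [hcy, if_pos ht]
    have hfm : f ((1-mu) • x + mu • y) = g μ₀ := by
      rw [hf]; simp only [hcmid, if_pos hμ₀J]
    have key := hfC₁ x hxΩ y hyΩ mu ⟨hmu', hmu1⟩
    rw [hfx, hfy, hfm] at key
    have hgs := (hmemJ hs).1
    have hgt := (hmemJ ht).1
    have hgμ := (hmemJ hμ₀J).1
    rw [← EReal.coe_toReal (h1t hgs) (h1b hgs), ← EReal.coe_toReal (h1t hgt) (h1b hgt),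
      ← EReal.coe_toReal (h1t hgμ) (h1b hgμ), ← EReal.coe_mul, ← EReal.coe_mul,
      ← EReal.coe_add, EReal.coe_le_coe_iff] at key
    have hgoal : la • (F₁ (g s)).toReal + mu • (F₁ (g t)).toReal
        ≤ (F₁ (g (la • s + mu • t))).toReal := by
      rw [hla_eq]
      simp only [smul_eq_mul]
      exact key
    exact hgoal
  · -- backward direction
    intro hconc f hf
    refine ⟨hf.1, ?_⟩
    intro x hx y hy lam hlam
    have hmidΩ : (1-lam) • x + lam • y ∈ Ω :=
      hΩconv hx hy (by linarith [hlam.2]) hlam.1.le (by ring)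
    have huI : f x ∈ intervalI a := hf.1 hx
    have hvI : f y ∈ intervalI a := hf.1 hy
    have hwI : f ((1-lam) • x + lam • y) ∈ intervalI a := hf.1 hmidΩ
    by_cases hu0 : f x = 0
    · rw [hu0, hF₁.map_zero,
        EReal.coe_mul_bot_of_pos (by linarith [hlam.2] : (0:ℝ) < 1 - lam), EReal.bot_add]
      exact bot_le
    by_cases hv0 : f y = 0
    · rw [hv0, hF₁.map_zero, EReal.coe_mul_bot_of_pos hlam.1, EReal.add_bot]
      exact bot_le
    have hu : f x ∈ intervalI₀ a := mem_intervalI₀ huI hu0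
    have hv : f y ∈ intervalI₀ a := mem_intervalI₀ hvI hv0
    set s : ℝ := (F₂ (f x)).toReal with hs
    set t : ℝ := (F₂ (f y)).toReal with ht
    have hsJ : s ∈ J := ⟨f x, hu, rfl⟩
    have htJ : t ∈ J := ⟨f y, hv, rfl⟩
    have key2 := hf.2 x hx y hy lam hlam
    rw [← EReal.coe_toReal (h2t hu) (h2b hu), ← EReal.coe_toReal (h2t hv) (h2b hv),
      ← EReal.coe_mul, ← EReal.coe_mul, ← EReal.coe_add] at key2
    set μ₀ : ℝ := (1-lam)*s + lam*t with hμ₀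
    have hw0 : f ((1-lam) • x + lam • y) ≠ 0 := by
      intro h0
      rw [h0, hF₂.map_zero, le_bot_iff] at key2
      exact EReal.coe_ne_bot _ key2
    have hw : f ((1-lam) • x + lam • y) ∈ intervalI₀ a := mem_intervalI₀ hwI hw0
    set w' : ℝ := (F₂ (f ((1-lam) • x + lam • y))).toReal with hw'
    have hw'J : w' ∈ J := ⟨_, hw, rfl⟩
    have hμ₀w' : μ₀ ≤ w' := by
      have := EReal.toReal_le_toReal key2 (EReal.coe_ne_bot _) (h2t hw)
      simpa using this
    have hμ₀J : μ₀ ∈ J := by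
      have := hJconv hsJ htJ (by linarith [hlam.2] : (0:ℝ) ≤ 1 - lam) hlam.1.le (by ring)
      simpa [smul_eq_mul, hμ₀] using this
    have hcc := hconc.2 hsJ htJ (by linarith [hlam.2] : (0:ℝ) ≤ 1 - lam) hlam.1.le
      (by ring : (1-lam) + lam = 1)
    simp only [smul_eq_mul] at hcc
    have hgs : g s = f x := hg _ hu
    have hgt : g t = f y := hg _ hv
    have hgw : g w' = f ((1-lam) • x + lam • y) := hg _ hw
    have hmono' := hmono hμ₀J hw'J hμ₀w'
    rw [hgw] at hmono'
    rw [hgs, hgt] at hcc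
    have hreal : (1-lam) * (F₁ (f x)).toReal + lam * (F₁ (f y)).toReal
        ≤ (F₁ (f ((1-lam) • x + lam • y))).toReal := le_trans hcc hmono'
    rw [← EReal.coe_toReal (h1t hu) (h1b hu), ← EReal.coe_toReal (h1t hv) (h1b hv),
      ← EReal.coe_toReal (h1t hw) (h1b hw), ← EReal.coe_mul, ← EReal.coe_mul,
      ← EReal.coe_add, EReal.coe_le_coe_iff]
    exact hreal
end
end

section
/- Let a ∈ (0,∞], I = [0,a), let F₁ and F₂ be admissible on I, and let Ω be a convex domain in ℝⁿ (n ≥ 1). If C_Ω[F₂] ⊆ C_Ω[F₁] (F₁-concavity is weaker than F₂-concavity in A_Ω(I)) and lim_{r→0+} F₂(r) = -∞, then lim_{r→0+} F₁(r) = -∞. -/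
open Set Filter
open scoped ENNReal Topology

noncomputable section

/-! If `F₁ ≥ M` near `0`, fix `0 < d < c < a`, two points `x ≠ y` of `Ω` and `λ ∈ (0,1)` so
close to `1` that `(1-λ)M + λF₁(c) > F₁(d)`. Since `F₂ → -∞` at `0+`, continuity makes `F₂` map
`(0,c]` onto `(-∞, F₂(c)]`, so for an affine `L` the function `f = f_{F₂} ∘ min(L, F₂(c))` is
`F₂`-concave, and `L` can be chosen so that `f(y) = c` and `f((1-λ)x + λy) = d`. Its
`F₁`-concavity at `x, y, λ` reads `F₁(d) ≥ (1-λ)F₁(f(x)) + λF₁(c) ≥ (1-λ)M + λF₁(c)`. -/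

lemma intervalI₀_subset_intervalI {a : ℝ≥0∞} : intervalI₀ a ⊆ intervalI a :=
  fun _ hr => ⟨hr.1.le, hr.2⟩

lemma Ioc_subset_intervalI₀ {a : ℝ≥0∞} {c : ℝ} (hc : c ∈ intervalI₀ a) :
    Ioc 0 c ⊆ intervalI₀ a :=
  fun _ hr => ⟨hr.1, (ENNReal.ofReal_le_ofReal hr.2).trans_lt hc.2⟩

lemma intervalI₀_nonempty {a : ℝ≥0∞} (ha : 0 < a) : (intervalI₀ a).Nonempty := by
  obtain ⟨r, -, hr0, hra⟩ := ENNReal.lt_iff_exists_real_btwn.1 ha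
  exact ⟨r, ENNReal.ofReal_pos.1 hr0, hra⟩

lemma exists_lt_sub_mul_add_mul {M D C : ℝ} (hMD : M ≤ D) (hDC : D < C) :
    ∃ lam ∈ Ioo (0 : ℝ) 1, D < (1 - lam) * M + lam * C := by
  have hCM : 0 < C - M := by linarith
  obtain ⟨lam, h₀, h₁⟩ := exists_between ((div_lt_one hCM).2 (by linarith : D - M < C - M))
  refine ⟨lam, ⟨(div_nonneg (by linarith) hCM.le).trans_lt h₀, h₁⟩, ?_⟩
  rw [div_lt_iff₀ hCM] at h₀
  linarith

lemma exists_affineMap_apply_eq {𝕜 E : Type*} [Field 𝕜] [AddCommGroup E] [Module 𝕜 E]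
    {x y : E} (hxy : x ≠ y) (u v : 𝕜) : ∃ L : E →ᵃ[𝕜] 𝕜, L x = u ∧ L y = v := by
  obtain ⟨φ, hφ⟩ := Module.Projective.exists_dual_eq_one 𝕜 (sub_ne_zero.2 hxy.symm)
  rw [map_sub] at hφ
  refine ⟨((v - u) • φ).toAffineMap + AffineMap.const 𝕜 E (u - (v - u) * φ x), ?_, ?_⟩
  · simp
  · simp only [AffineMap.coe_add, LinearMap.coe_toAffineMap, LinearMap.coe_smul,
      AffineMap.coe_const, Pi.add_apply, Pi.smul_apply, smul_eq_mul, Function.const_apply]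
    linear_combination (v - u) * hφ

lemma AffineMap.concaveOn {𝕜 E : Type*} [Field 𝕜] [LinearOrder 𝕜] [IsStrictOrderedRing 𝕜]
    [AddCommGroup E] [Module 𝕜 E] (L : E →ᵃ[𝕜] 𝕜) {s : Set E} (hs : Convex 𝕜 s) :
    ConcaveOn 𝕜 s L :=
  ⟨hs, fun _ _ _ _ _ _ _ _ hab => (Convex.combo_affine_apply hab).ge⟩

lemma FConcaveOn.of_comp_eq {E : Type*} [AddCommGroup E] [Module ℝ E] {F : ℝ → EReal}
    {Ω : Set E} {f h : E → ℝ} (hh : ConcaveOn ℝ univ h) (hfh : ∀ p, F (f p) = h p) :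
    FConcaveOn F Ω f := by
  intro x _ y _ lam hlam
  rw [hfh, hfh, hfh, ← EReal.coe_mul, ← EReal.coe_mul, ← EReal.coe_add, EReal.coe_le_coe_iff]
  exact hh.2 (mem_univ x) (mem_univ y) (by linarith [hlam.2]) hlam.1.le (by ring)

namespace IsAdmissible

variable {a : ℝ≥0∞} {F : ℝ → EReal}

lemma strictMonoOn_intervalI₀ (hF : IsAdmissible a F) : StrictMonoOn F (intervalI₀ a) :=
  hF.strictMonoOn.mono intervalI₀_subset_intervalI

lemma exists_eq_coe (hF : IsAdmissible a F) {r : ℝ} (hr : r ∈ intervalI₀ a) :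
    ∃ t : ℝ, F r = t := by
  have h0 : (0 : ℝ) ∈ intervalI a :=
    ⟨le_rfl, (ENNReal.ofReal_le_ofReal hr.1.le).trans_lt hr.2⟩
  have hbot : ⊥ < F r :=
    hF.map_zero ▸ hF.strictMonoOn h0 (intervalI₀_subset_intervalI hr) hr.1
  exact ⟨(F r).toReal,
    (EReal.coe_toReal (hF.lt_top r (intervalI₀_subset_intervalI hr)).ne hbot.ne').symm⟩

lemma exists_forall_coe_le_of_not_tendsto (hF : IsAdmissible a F)
    (hlim : ¬Tendsto F (𝓝[>] 0) (𝓝 ⊥)) :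
    ∃ M : ℝ, ∀ r ∈ intervalI₀ a, (M : EReal) ≤ F r := by
  rw [EReal.tendsto_nhds_bot_iff_real] at hlim
  push Not at hlim
  obtain ⟨M, hM⟩ := hlim
  refine ⟨M, fun r hr => ?_⟩
  obtain ⟨s, hMs, hs⟩ := (hM.and_eventually (Ioo_mem_nhdsGT hr.1)).exists
  exact hMs.trans
    (hF.strictMonoOn_intervalI₀ (Ioc_subset_intervalI₀ hr ⟨hs.1, hs.2.le⟩) hr hs.2).le

lemma exists_eq_coe_of_le (hF : IsAdmissible a F) (hlim : Tendsto F (𝓝[>] 0) (𝓝 ⊥))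
    {c : ℝ} (hc : c ∈ intervalI₀ a) {t : ℝ} (ht : (t : EReal) ≤ F c) :
    ∃ r ∈ Ioc 0 c, F r = t := by
  obtain ⟨r₀, hr₀t, hr₀⟩ := ((hlim.eventually (eventually_lt_nhds (EReal.bot_lt_coe t))).and
    (Ioo_mem_nhdsGT hc.1)).exists
  have hcont : ContinuousOn F (Icc r₀ c) := hF.continuousOn.mono fun r hr =>
    Ioc_subset_intervalI₀ hc ⟨hr₀.1.trans_le hr.1, hr.2⟩
  obtain ⟨r, hr, hrt⟩ := intermediate_value_Icc hr₀.2.le hcont ⟨le_of_lt hr₀t, ht⟩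
  exact ⟨r, ⟨hr₀.1.trans_le hr.1, hr.2⟩, hrt⟩

lemma exists_mem_cSet_apply_eq {E : Type*} [AddCommGroup E] [Module ℝ E]
    (hF : IsAdmissible a F) (hlim : Tendsto F (𝓝[>] 0) (𝓝 ⊥)) {c d : ℝ}
    (hc : c ∈ intervalI₀ a) (hd : d ∈ Ioc 0 c) {x y : E} (hxy : x ≠ y) {lam : ℝ}
    (hlam : lam ∈ Ioo (0 : ℝ) 1) (Ω : Set E) :
    ∃ f ∈ CSet a F Ω, f x ∈ intervalI₀ a ∧ f y = c ∧ f ((1 - lam) • x + lam • y) = d := by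
  have hd' := Ioc_subset_intervalI₀ hc hd
  obtain ⟨C, hC⟩ := hF.exists_eq_coe hc
  obtain ⟨D, hD⟩ := hF.exists_eq_coe hd'
  have hDC : D ≤ C := by
    have := hF.strictMonoOn_intervalI₀.monotoneOn hd' hc hd.2
    rwa [hC, hD, EReal.coe_le_coe_iff] at this
  have hlam₁ : 0 < 1 - lam := sub_pos.2 hlam.2
  obtain ⟨L, hLx, hLy⟩ := exists_affineMap_apply_eq hxy ((D - lam * C) / (1 - lam)) C
  have hconc : ConcaveOn ℝ univ fun p => min (L p) C :=
    (L.concaveOn convex_univ).inf (concaveOn_const C convex_univ)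
  choose f hf hfF using fun p => hF.exists_eq_coe_of_le hlim hc (t := min (L p) C)
    (by rw [hC]; exact_mod_cast min_le_right _ _)
  have hfI : ∀ p, f p ∈ intervalI₀ a := fun p => Ioc_subset_intervalI₀ hc (hf p)
  have hinj := hF.strictMonoOn_intervalI₀.injOn
  refine ⟨f, ⟨fun p _ => intervalI₀_subset_intervalI (hfI p), FConcaveOn.of_comp_eq hconc hfF⟩,
    hfI x, hinj (hfI y) hc ?_, hinj (hfI _) hd' ?_⟩
  · rw [hfF, hLy, min_self, hC]
  · rw [hfF, Convex.combo_affine_apply (by ring), hLx, hLy, smul_eq_mul, smul_eq_mul,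
      mul_div_cancel₀ _ hlam₁.ne', sub_add_cancel, min_eq_left hDC, hD]

end IsAdmissible

theorem stmt3_general {n : ℕ} (hn : 1 ≤ n) (a : ℝ≥0∞) (ha : 0 < a)
    (F₁ F₂ : ℝ → EReal) (hF₁ : IsAdmissible a F₁) (hF₂ : IsAdmissible a F₂)
    (Ω : Set (EuclideanSpace ℝ (Fin n)))
    (hΩopen : IsOpen Ω) (hΩne : Ω.Nonempty)
    (hsub : CSet a F₂ Ω ⊆ CSet a F₁ Ω)
    (hlim₂ : Tendsto F₂ (𝓝[>] (0:ℝ)) (𝓝 ⊥)) :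
    Tendsto F₁ (𝓝[>] (0:ℝ)) (𝓝 ⊥) := by
  by_contra hlim₁
  obtain ⟨M, hM⟩ := hF₁.exists_forall_coe_le_of_not_tendsto hlim₁
  obtain ⟨c, hc⟩ := intervalI₀_nonempty ha
  have hd : c / 2 ∈ Ioc 0 c := ⟨half_pos hc.1, half_le_self hc.1.le⟩
  have hd' := Ioc_subset_intervalI₀ hc hd
  obtain ⟨C, hC⟩ := hF₁.exists_eq_coe hc
  obtain ⟨D, hD⟩ := hF₁.exists_eq_coe hd'
  have hDC : D < C := by
    have := hF₁.strictMonoOn_intervalI₀ hd' hc (half_lt_self hc.1)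
    rwa [hC, hD, EReal.coe_lt_coe_iff] at this
  have hMD : M ≤ D := by exact_mod_cast hD ▸ hM _ hd'
  obtain ⟨lam, hlam, hDlt⟩ := exists_lt_sub_mul_add_mul hMD hDC
  have : Nonempty (Fin n) := ⟨⟨0, hn⟩⟩
  obtain ⟨x, hx⟩ := hΩne
  obtain ⟨y, hy, hyx⟩ := ((eventually_nhdsWithin_of_eventually_nhds (hΩopen.mem_nhds hx)).and
    (self_mem_nhdsWithin : {x}ᶜ ∈ 𝓝[≠] x)).exists
  obtain ⟨f, hf, hfx, hfy, hfz⟩ :=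
    hF₂.exists_mem_cSet_apply_eq hlim₂ hc hd (Ne.symm hyx) hlam Ω
  obtain ⟨u, hu⟩ := hF₁.exists_eq_coe hfx
  have hMu : M ≤ u := by exact_mod_cast hu ▸ hM _ hfx
  have hconc := (hsub hf).2 x hx y hy lam hlam
  rw [hfy, hfz, hu, hC, hD, ← EReal.coe_mul, ← EReal.coe_mul, ← EReal.coe_add,
    EReal.coe_le_coe_iff] at hconc
  linarith [mul_le_mul_of_nonneg_left hMu (sub_nonneg.2 hlam.2.le)]

/-- if `F₁`-concavity is weaker than `F₂`-concavity in `A_Ω(I)`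
(i.e. `C_Ω[F₂] ⊆ C_Ω[F₁]`) and `lim_{r→0+} F₂(r) = -∞`, then
`lim_{r→0+} F₁(r) = -∞`. -/
theorem stmt3 {n : ℕ} (hn : 1 ≤ n) (a : ℝ≥0∞) (ha : 0 < a)
    (F₁ F₂ : ℝ → EReal) (hF₁ : IsAdmissible a F₁) (hF₂ : IsAdmissible a F₂)
    (Ω : Set (EuclideanSpace ℝ (Fin n)))
    (hΩconv : Convex ℝ Ω) (hΩopen : IsOpen Ω) (hΩne : Ω.Nonempty)
    (hsub : CSet a F₂ Ω ⊆ CSet a F₁ Ω)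
    (hlim₂ : Tendsto F₂ (𝓝[>] (0:ℝ)) (𝓝 ⊥)) :
    Tendsto F₁ (𝓝[>] (0:ℝ)) (𝓝 ⊥) :=
  stmt3_general hn a ha F₁ F₂ hF₁ hF₂ Ω hΩopen hΩne hsub hlim₂
end
end

section
/- Let h(z) := (4π)^{-1/2} ∫₀^∞ e^{-(z-w)²/4} dw. Then the function z ↦ h(z)/h'(z) is convex on ℝ; equivalently, (log h)' is (-1)-concave on ℝ. -/
/-!
Write `h = c G` with `G z = ∫_{-∞}^z g` and `g u = exp (-u²/4)`, so that `h / h' = G / g =: M`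
is a Mills ratio. Since `g' = -(z/2) g`, it satisfies `M' = 1 + z M / 2`, hence
`4 M'' = (2 + z²) M + 2z`. The right side is nonnegative by the Mills-type bound
`G ≥ -2z g / (2 + z²)`: the difference `G + 2z g / (2 + z²)` has derivative
`8 g / (2 + z²)² > 0` and tends to `0` at `-∞`.
-/

open Set Filter MeasureTheory
open scoped Topology

noncomputable section

/-- `h(z) = (4π)^{-1/2} ∫₀^∞ e^{-(z-w)²/4} dw`. -/
def hfun (z : ℝ) : ℝ :=
  (4 * Real.pi) ^ (-(1:ℝ)/2) * ∫ w in Ioi (0:ℝ), Real.exp (-(z - w)^2 / 4)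

open Real

def gauss (u : ℝ) : ℝ := exp (-u ^ 2 / 4)

def gaussPrimitive (z : ℝ) : ℝ := ∫ u in Iic z, gauss u

def millsRatio (z : ℝ) : ℝ := gaussPrimitive z / gauss z

lemma gauss_pos (u : ℝ) : 0 < gauss u := exp_pos _

lemma continuous_gauss : Continuous gauss := by unfold gauss; fun_prop

lemma integrable_gauss : Integrable gauss := by
  convert integrable_exp_neg_mul_sq (b := 1 / 4) (by norm_num) using 2 with u
  simp only [gauss]; ring_nf

lemma hasDerivAt_gauss (z : ℝ) : HasDerivAt gauss (-(z / 2) * gauss z) z := by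
  have h : HasDerivAt (fun u : ℝ => -u ^ 2 / 4) (-(z / 2)) z :=
    ((hasDerivAt_pow 2 z).fun_neg.div_const 4).congr_deriv (by push_cast; ring)
  exact h.exp.congr_deriv (by rw [gauss, mul_comm])

lemma tendsto_gauss_atBot : Tendsto gauss atBot (𝓝 0) := by
  have hsq : Tendsto (fun z : ℝ => -z ^ 2 / 4) atBot atBot := by
    have := (tendsto_id.atBot_mul_atBot₀ tendsto_id : Tendsto (fun z : ℝ => z * z) atBot atTop)
    refine ((tendsto_neg_atTop_atBot.comp this).atBot_div_const (r := 4) (by norm_num)).congr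
      fun z => ?_
    simp [sq]
  exact tendsto_exp_atBot.comp hsq

lemma gaussPrimitive_sub (a b : ℝ) :
    gaussPrimitive b - gaussPrimitive a = ∫ u in a..b, gauss u :=
  intervalIntegral.integral_Iic_sub_Iic integrable_gauss.integrableOn integrable_gauss.integrableOn

lemma hasDerivAt_gaussPrimitive (z : ℝ) : HasDerivAt gaussPrimitive (gauss z) z := by
  have hFTC : HasDerivAt (fun b => ∫ u in (0 : ℝ)..b, gauss u) (gauss z) z :=
    intervalIntegral.integral_hasDerivAt_right integrable_gauss.intervalIntegrable
      continuous_gauss.stronglyMeasurable.stronglyMeasurableAtFilter continuous_gauss.continuousAt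
  refine (hFTC.const_add (gaussPrimitive 0)).congr_of_eventuallyEq (.of_forall fun b => ?_)
  dsimp only
  rw [← gaussPrimitive_sub 0 b, add_sub_cancel]

lemma tendsto_gaussPrimitive_atBot : Tendsto gaussPrimitive atBot (𝓝 0) := by
  have := intervalIntegral_tendsto_integral_Iic 0 integrable_gauss.integrableOn tendsto_id
  convert (tendsto_const_nhds (x := gaussPrimitive 0)).sub this using 1
  · ext a
    rw [id, ← gaussPrimitive_sub]; ring
  · rw [gaussPrimitive, sub_self]

lemma hfun_eq_mul_gaussPrimitive (z : ℝ) :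
    hfun z = (4 * π) ^ (-(1 : ℝ) / 2) * gaussPrimitive z := by
  rw [hfun, gaussPrimitive]
  congr 1
  calc ∫ w in Ioi (0 : ℝ), exp (-(z - w) ^ 2 / 4)
      = ∫ w in Ioi (0 : ℝ), gauss (z + -w) := by simp only [gauss, ← sub_eq_add_neg]
    _ = ∫ v in Iic 0, gauss (z + v) := by
      rw [integral_comp_neg_Ioi 0 fun v => gauss (z + v), neg_zero]
    _ = ∫ u in Iic z, gauss u := by
      rw [← (measurePreserving_add_left volume z).setIntegral_preimage_emb
        (measurableEmbedding_addLeft z) gauss (Iic z)]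
      simp

lemma hasDerivAt_hfun (z : ℝ) : HasDerivAt hfun ((4 * π) ^ (-(1 : ℝ) / 2) * gauss z) z :=
  ((hasDerivAt_gaussPrimitive z).const_mul _).congr_of_eventuallyEq
    (.of_forall hfun_eq_mul_gaussPrimitive)

lemma hfun_div_deriv_hfun (z : ℝ) : hfun z / deriv hfun z = millsRatio z := by
  have hc : (4 * π) ^ (-(1 : ℝ) / 2) ≠ 0 := by positivity
  rw [(hasDerivAt_hfun z).deriv, hfun_eq_mul_gaussPrimitive, mul_div_mul_left _ _ hc, millsRatio]

lemma hasDerivAt_millsRatio (z : ℝ) : HasDerivAt millsRatio (1 + z / 2 * millsRatio z) z := by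
  have hg := (gauss_pos z).ne'
  refine ((hasDerivAt_gaussPrimitive z).div (hasDerivAt_gauss z) hg).congr_deriv ?_
  rw [millsRatio]; field_simp; ring

lemma hasDerivAt_deriv_millsRatio (z : ℝ) :
    HasDerivAt (deriv millsRatio) (((2 + z ^ 2) * millsRatio z + 2 * z) / 4) z := by
  have hderiv : deriv millsRatio = fun z => 1 + z / 2 * millsRatio z :=
    funext fun z => (hasDerivAt_millsRatio z).deriv
  rw [hderiv]
  refine (((hasDerivAt_id z).div_const 2).mul (hasDerivAt_millsRatio z)).const_add 1
    |>.congr_deriv ?_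
  simp only [id]; ring

def millsGap (z : ℝ) : ℝ := gaussPrimitive z + 2 * z * gauss z / (2 + z ^ 2)

lemma hasDerivAt_millsGap (z : ℝ) : HasDerivAt millsGap (8 * gauss z / (2 + z ^ 2) ^ 2) z := by
  have hpos : 2 + z ^ 2 ≠ 0 := by positivity
  have hnum :
      HasDerivAt (fun z => 2 * z * gauss z) (2 * gauss z + 2 * z * (-(z / 2) * gauss z)) z :=
    ((hasDerivAt_id z).const_mul 2).mul (hasDerivAt_gauss z) |>.congr_deriv (by simp)
  have hden : HasDerivAt (fun z : ℝ => 2 + z ^ 2) (2 * z) z :=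
    ((hasDerivAt_pow 2 z).const_add 2).congr_deriv (by push_cast; ring)
  refine ((hasDerivAt_gaussPrimitive z).add (hnum.div hden hpos)).congr_deriv ?_
  field_simp; ring

lemma strictMono_millsGap : StrictMono millsGap :=
  strictMono_of_deriv_pos fun z => by
    rw [(hasDerivAt_millsGap z).deriv]
    have := gauss_pos z
    positivity

lemma abs_two_mul_div_le_one (z : ℝ) : |2 * z / (2 + z ^ 2)| ≤ 1 := by
  have hpos : (0 : ℝ) < 2 + z ^ 2 := by positivity
  rw [abs_le, le_div_iff₀ hpos, div_le_one hpos]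
  constructor <;> nlinarith [sq_nonneg (z + 1), sq_nonneg (z - 1)]

lemma tendsto_millsGap_atBot : Tendsto millsGap atBot (𝓝 0) := by
  have hbound (z : ℝ) : |2 * z * gauss z / (2 + z ^ 2)| ≤ gauss z := by
    rw [mul_div_right_comm, abs_mul, abs_of_pos (gauss_pos z)]
    exact mul_le_of_le_one_left (gauss_pos z).le (abs_two_mul_div_le_one z)
  have hlo : Tendsto (fun z => gaussPrimitive z - gauss z) atBot (𝓝 0) := by
    simpa using tendsto_gaussPrimitive_atBot.sub tendsto_gauss_atBot
  have hhi : Tendsto (fun z => gaussPrimitive z + gauss z) atBot (𝓝 0) := by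
    simpa using tendsto_gaussPrimitive_atBot.add tendsto_gauss_atBot
  refine tendsto_of_tendsto_of_tendsto_of_le_of_le hlo hhi (fun z => ?_) (fun z => ?_) <;>
    have := abs_le.1 (hbound z) <;> unfold millsGap <;> linarith

lemma millsGap_nonneg (z : ℝ) : 0 ≤ millsGap z :=
  strictMono_millsGap.monotone.le_of_tendsto tendsto_millsGap_atBot z

lemma two_add_sq_mul_millsRatio_add_nonneg (z : ℝ) :
    0 ≤ (2 + z ^ 2) * millsRatio z + 2 * z := by
  have h : (2 + z ^ 2) * millsRatio z + 2 * z = (2 + z ^ 2) * millsGap z / gauss z := by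
    have := (gauss_pos z).ne'
    rw [millsRatio, millsGap]; field_simp
  rw [h]
  have := gauss_pos z
  have := millsGap_nonneg z
  positivity

/-- the function `z ↦ h(z)/h'(z)` is convex on `ℝ`; equivalently,
`(log h)' = h'/h` is `(-1)`-concave on `ℝ`. -/
theorem stmt17 :
    ConvexOn ℝ (univ : Set ℝ) (fun z => hfun z / deriv hfun z) := by
  simp only [hfun_div_deriv_hfun]
  refine convexOn_univ_of_deriv2_nonneg (fun z => (hasDerivAt_millsRatio z).differentiableAt)
    (fun z => (hasDerivAt_deriv_millsRatio z).differentiableAt) fun z => ?_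
  rw [Function.iterate_succ_apply, Function.iterate_one, (hasDerivAt_deriv_millsRatio z).deriv]
  exact div_nonneg (two_add_sq_mul_millsRatio_add_nonneg z) (by norm_num)
end
end

section
/- Let n ≥ 1, m > 1, and α ∈ (-∞, (m-1)/2). Let Ω be a bounded convex domain in ℝⁿ such that ⟨e₁,x⟩ > 0 for every x ∈ Ω, where e₁ is the first standard basis vector. Define φ : Ω → (0,∞) by φ(x) := ⟨e₁,x⟩^{1/α} if α ≠ 0 and φ(x) := e^{⟨e₁,x⟩} if α = 0 (so φ is α-concave in Ω). Suppose u : Ω × [0,∞) → ℝ is positive, u together with its first and second spatial partial derivatives and its time derivative is continuous on Ω × [0,∞), u satisfies the porous medium equation ∂_t u = Δ(u^m) pointwise on Ω × [0,∞), and u(·,0) = φ. Then there exists t > 0 such that u(·,t) is not α-concave in Ω. -/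
open Set Filter
open scoped Topology

noncomputable section

/-- The admissible function `Φ_α` on `[0,∞)`: `Φ_α(r) = (r^α - 1)/α` for `α ≠ 0`,
`Φ₀(r) = log r`, with `Φ_α(0) = -∞` (we also set the irrelevant value `⊥` for `r < 0`). -/
def Phi (α : ℝ) : ℝ → EReal := fun r =>
  if r ≤ 0 then ⊥
  else if α = 0 then ((Real.log r : ℝ) : EReal)
  else (((r ^ α - 1) / α : ℝ) : EReal)

/-!
At `t = 0` the function `Φ_α(u) = Φ_α(φ)` is affine in `x₁`, so the midpoint defect
`Φ_α(u(x₀ + h e₁, t)) + Φ_α(u(x₀ - h e₁, t)) - 2 Φ_α(u(x₀, t))` vanishes. By the equation, its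
time derivative at `t = 0` is the second difference of the rate `Φ_α'(φ) Δ(φ^m)`, which as a
function of `x₁` is `C x₁^β` with `C > 0` and `β = (m-1)/α - 1` (resp. `m² e^((m-1) x₁)` for
`α = 0`). The condition `α < (m-1)/2` is exactly `β < 0 ∨ β > 1`, so the rate is strictly convex,
the defect becomes positive for small `t > 0`, and `α`-concavity fails at the midpoint `x₀`.
-/
def phiReal (α r : ℝ) : ℝ := if α = 0 then Real.log r else (r ^ α - 1) / α

theorem Phi_of_pos {α r : ℝ} (hr : 0 < r) : Phi α r = phiReal α r := by
  by_cases hα : α = 0 <;> simp [Phi, phiReal, hr.not_ge, hα]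

theorem hasDerivAt_phiReal {α r : ℝ} (hr : 0 < r) : HasDerivAt (phiReal α) (r ^ (α - 1)) r := by
  by_cases hα : α = 0
  · have hfun : phiReal α = Real.log := funext fun s => if_pos hα
    rw [hfun, hα, zero_sub, Real.rpow_neg_one]
    exact Real.hasDerivAt_log hr.ne'
  · have hfun : phiReal α = fun s => (s ^ α - 1) / α := funext fun s => if_neg hα
    rw [hfun]
    have h := ((Real.hasDerivAt_rpow_const (p := α) (Or.inl hr.ne')).sub_const 1).div_const α
    rwa [mul_div_cancel_left₀ _ hα] at h

theorem FConcaveOn.phiReal_le {E : Type*} [AddCommGroup E] [Module ℝ E] {α : ℝ} {Ω : Set E}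
    {f : E → ℝ} (hf : FConcaveOn (Phi α) Ω f) {x y : E} (hx : x ∈ Ω) (hy : y ∈ Ω) {lam : ℝ}
    (hlam : lam ∈ Ioo (0 : ℝ) 1) (hfx : 0 < f x) (hfy : 0 < f y)
    (hfxy : 0 < f ((1 - lam) • x + lam • y)) :
    (1 - lam) * phiReal α (f x) + lam * phiReal α (f y)
      ≤ phiReal α (f ((1 - lam) • x + lam • y)) := by
  have h := hf x hx y hy lam hlam
  rw [Phi_of_pos hfx, Phi_of_pos hfy, Phi_of_pos hfxy] at h
  exact_mod_cast h

theorem exists_lt_of_hasDerivWithinAt_Ici {D : ℝ → ℝ} {D' x : ℝ}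
    (hD : HasDerivWithinAt D D' (Ici x) x) (hD' : 0 < D') : ∃ t > x, D x < D t := by
  rw [hasDerivWithinAt_iff_tendsto_slope, Ici_sdiff_left] at hD
  obtain ⟨t, hslope, ht⟩ :=
    ((hD.eventually (eventually_gt_nhds hD')).and self_mem_nhdsWithin).exists
  refine ⟨t, ht, ?_⟩
  rw [slope_def_field] at hslope
  exact sub_pos.1 ((div_pos_iff_of_pos_right (sub_pos.2 ht)).1 hslope)

theorem IsOpen.exists_pos_add_smul_mem_and_sub_smul_mem {E : Type*} [NormedAddCommGroup E]
    [NormedSpace ℝ E] {Ω : Set E} (hΩ : IsOpen Ω) {x : E} (hx : x ∈ Ω) (v : E) :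
    ∃ h > (0 : ℝ), x + h • v ∈ Ω ∧ x - h • v ∈ Ω := by
  have hmem : ∀ w : E, ∀ᶠ h in 𝓝 (0 : ℝ), x + h • w ∈ Ω := fun w => by
    have hc : ContinuousAt (fun h : ℝ => x + h • w) 0 := by fun_prop
    exact hc.preimage_mem_nhds (by simpa using hΩ.mem_nhds hx)
  obtain ⟨h, ⟨hp, hm⟩, hh⟩ := (((hmem v).and (hmem (-v))).filter_mono nhdsWithin_le_nhds
    |>.and (self_mem_nhdsWithin (s := Ioi 0))).exists
  exact ⟨h, hh, hp, by simpa [sub_eq_add_neg] using hm⟩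

theorem StrictConvexOn.two_mul_lt_add {S : Set ℝ} {f : ℝ → ℝ} (hf : StrictConvexOn ℝ S f)
    {a h : ℝ} (hm : a - h ∈ S) (hp : a + h ∈ S) (hh : h ≠ 0) :
    2 * f a < f (a - h) + f (a + h) := by
  have hne : a - h ≠ a + h := by intro h'; apply hh; linarith
  have := hf.2 hm hp hne (by norm_num : (0 : ℝ) < 1 / 2) (by norm_num : (0 : ℝ) < 1 / 2)
    (by norm_num)
  simp only [smul_eq_mul] at this
  rw [show 1 / 2 * (a - h) + 1 / 2 * (a + h) = a by ring] at this
  linarith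

theorem strictConvexOn_of_hasDerivAt2_pos {S : Set ℝ} (hS : Convex ℝ S) (hSo : IsOpen S)
    {f f' f'' : ℝ → ℝ} (hf : ∀ x ∈ S, HasDerivAt f (f' x) x)
    (hf' : ∀ x ∈ S, HasDerivAt f' (f'' x) x) (hf'' : ∀ x ∈ S, 0 < f'' x) :
    StrictConvexOn ℝ S f := by
  refine strictConvexOn_of_deriv2_pos' hS (fun x hx => (hf x hx).continuousAt.continuousWithinAt)
    fun x hx => ?_
  have hderiv : deriv f =ᶠ[𝓝 x] f' :=
    Filter.eventuallyEq_of_mem (hSo.mem_nhds hx) fun y hy => (hf y hy).deriv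
  rw [Function.iterate_succ_apply, Function.iterate_one, hderiv.deriv_eq, (hf' x hx).deriv]
  exact hf'' x hx

def coordLaplacian {n : ℕ} (f : EuclideanSpace ℝ (Fin n) → ℝ) (x : EuclideanSpace ℝ (Fin n)) :
    ℝ :=
  ∑ i : Fin n, fderiv ℝ (fun y => fderiv ℝ f y (EuclideanSpace.single i 1)) x
    (EuclideanSpace.single i 1)

theorem coordLaplacian_eq_of_eqOn_comp_coord {n : ℕ} {k : Fin n}
    {Ω : Set (EuclideanSpace ℝ (Fin n))} (hΩ : IsOpen Ω) {f : EuclideanSpace ℝ (Fin n) → ℝ}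
    {g g' g'' : ℝ → ℝ} (hf : EqOn f (fun y => g (y k)) Ω)
    (hg : ∀ y ∈ Ω, HasDerivAt g (g' (y k)) (y k)) {x : EuclideanSpace ℝ (Fin n)} (hx : x ∈ Ω)
    (hg' : HasDerivAt g' (g'' (x k)) (x k)) :
    coordLaplacian f x = g'' (x k) := by
  set π := EuclideanSpace.proj (𝕜 := ℝ) k
  have hπ : ∀ i, π (EuclideanSpace.single i 1) = if i = k then 1 else 0 := fun i => by
    simp [π, eq_comm]
  have hfirst : ∀ i, ∀ y ∈ Ω, fderiv ℝ f y (EuclideanSpace.single i 1) =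
      π (EuclideanSpace.single i 1) * g' (π y) := fun i y hy => by
    have hderiv : HasFDerivAt (fun z => g (π z)) (g' (π y) • π) y :=
      (hg y hy).comp_hasFDerivAt y π.hasFDerivAt
    rw [(hderiv.congr_of_eventuallyEq (Filter.eventuallyEq_of_mem (hΩ.mem_nhds hy) hf)).fderiv]
    simp [mul_comm]
  have hsecond : ∀ i, fderiv ℝ (fun y => fderiv ℝ f y (EuclideanSpace.single i 1)) x
      (EuclideanSpace.single i 1) = if i = k then g'' (x k) else 0 := fun i => by
    have hderiv : HasFDerivAt (fun y => π (EuclideanSpace.single i 1) * g' (π y))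
        (π (EuclideanSpace.single i 1) • (g'' (π x) • π)) x :=
      (hg'.comp_hasFDerivAt x π.hasFDerivAt).const_mul _
    rw [(hderiv.congr_of_eventuallyEq
      (Filter.eventuallyEq_of_mem (hΩ.mem_nhds hx) (hfirst i))).fderiv]
    by_cases hi : i = k <;> simp [hπ, hi, π]
  simp only [coordLaplacian, hsecond, Finset.sum_ite_eq', Finset.mem_univ, if_true]

theorem exists_not_FConcaveOn_of_strictConvexOn_rate {n : ℕ} {k : Fin n} {m α : ℝ}
    {Ω : Set (EuclideanSpace ℝ (Fin n))} (hΩ : IsOpen Ω) (hΩne : Ω.Nonempty)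
    (hΩpos : ∀ x ∈ Ω, 0 < x k) {u : EuclideanSpace ℝ (Fin n) → ℝ → ℝ}
    (hu_pos : ∀ x ∈ Ω, ∀ t ∈ Ici (0 : ℝ), 0 < u x t)
    (hu_pde : ∀ x ∈ Ω, derivWithin (u x) (Ici 0) 0 = coordLaplacian (fun y => u y 0 ^ m) x)
    {ψ g g' g'' : ℝ → ℝ} (c d : ℝ) (hu_init : ∀ x ∈ Ω, u x 0 = ψ (x k))
    (hψg : ∀ s > 0, ψ s ^ m = g s) (hg : ∀ s > 0, HasDerivAt g (g' s) s)
    (hg' : ∀ s > 0, HasDerivAt g' (g'' s) s) (hg''_pos : ∀ s > 0, 0 < g'' s)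
    (hψ_affine : ∀ s > 0, phiReal α (ψ s) = c * s + d)
    (hrate : StrictConvexOn ℝ (Ioi 0) fun s => ψ s ^ (α - 1) * g'' s) :
    ∃ t > 0, ¬ FConcaveOn (Phi α) Ω (fun x => u x t) := by
  set rate : ℝ → ℝ := fun s => ψ s ^ (α - 1) * g'' s
  have hderiv : ∀ x ∈ Ω, HasDerivWithinAt (fun t => phiReal α (u x t)) (rate (x k)) (Ici 0) 0 := by
    intro x hx
    have hΔ : coordLaplacian (fun y => u y 0 ^ m) x = g'' (x k) :=
      coordLaplacian_eq_of_eqOn_comp_coord hΩ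
        (fun y hy => by simp only [hu_init y hy, hψg _ (hΩpos y hy)])
        (fun y hy => hg _ (hΩpos y hy)) hx (hg' _ (hΩpos x hx))
    -- `derivWithin` is junk (`0`) at a non-differentiable point; `Δ(φ^m) ≠ 0` rules that out.
    have hdiff := differentiableWithinAt_of_derivWithin_ne_zero
      (by rw [hu_pde x hx, hΔ]; exact (hg''_pos _ (hΩpos x hx)).ne')
    have hu := hdiff.hasDerivWithinAt
    rw [hu_pde x hx, hΔ] at hu
    have := (hasDerivAt_phiReal (α := α) (hu_pos x hx 0 self_mem_Ici)).comp_hasDerivWithinAt 0 hu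
    rwa [hu_init x hx] at this
  obtain ⟨x₀, hx₀⟩ := hΩne
  obtain ⟨h, hh, hxp, hxm⟩ :=
    hΩ.exists_pos_add_smul_mem_and_sub_smul_mem hx₀ (EuclideanSpace.single k 1)
  set xp := x₀ + h • EuclideanSpace.single k 1
  set xm := x₀ - h • EuclideanSpace.single k 1
  have hxp_k : xp k = x₀ k + h := by simp [xp]
  have hxm_k : xm k = x₀ k - h := by simp [xm]
  have hmid : (1 - 1 / 2 : ℝ) • xp + (1 / 2 : ℝ) • xm = x₀ := by simp only [xp, xm]; module
  set defect : ℝ → ℝ := fun t =>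
    phiReal α (u xp t) + phiReal α (u xm t) - 2 * phiReal α (u x₀ t)
  have hdefect0 : defect 0 = 0 := by
    simp only [defect]
    rw [hu_init _ hxp, hu_init _ hxm, hu_init _ hx₀, hψ_affine _ (hΩpos _ hxp),
      hψ_affine _ (hΩpos _ hxm), hψ_affine _ (hΩpos _ hx₀), hxp_k, hxm_k]
    ring
  have hdefect' : HasDerivWithinAt defect (rate (x₀ k + h) + rate (x₀ k - h) - 2 * rate (x₀ k))
      (Ici 0) 0 := by
    have := ((hderiv xp hxp).add (hderiv xm hxm)).sub ((hderiv x₀ hx₀).const_mul 2)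
    rwa [hxp_k, hxm_k] at this
  have hgap : 0 < rate (x₀ k + h) + rate (x₀ k - h) - 2 * rate (x₀ k) := by
    have := hrate.two_mul_lt_add (a := x₀ k) (h := h) (by rw [← hxm_k]; exact hΩpos _ hxm)
      (by rw [← hxp_k]; exact hΩpos _ hxp) hh.ne'
    linarith
  obtain ⟨t, ht, hdefect_t⟩ := exists_lt_of_hasDerivWithinAt_Ici hdefect' hgap
  refine ⟨t, ht, fun hconc => ?_⟩
  have hpos : ∀ x ∈ Ω, 0 < u x t := fun x hx => hu_pos x hx t ht.le
  have := hconc.phiReal_le hxp hxm (lam := 1 / 2) (by norm_num) (hpos _ hxp) (hpos _ hxm)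
    (by rw [hmid]; exact hpos _ hx₀)
  rw [hmid] at this
  simp only [defect] at hdefect_t
  linarith

theorem exists_not_FConcaveOn_of_initial_eq_exp {n : ℕ} {k : Fin n} {m : ℝ} (hm : 1 < m)
    {Ω : Set (EuclideanSpace ℝ (Fin n))} (hΩ : IsOpen Ω) (hΩne : Ω.Nonempty)
    (hΩpos : ∀ x ∈ Ω, 0 < x k) {u : EuclideanSpace ℝ (Fin n) → ℝ → ℝ}
    (hu_pos : ∀ x ∈ Ω, ∀ t ∈ Ici (0 : ℝ), 0 < u x t)
    (hu_pde : ∀ x ∈ Ω, derivWithin (u x) (Ici 0) 0 = coordLaplacian (fun y => u y 0 ^ m) x)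
    (hu_init : ∀ x ∈ Ω, u x 0 = Real.exp (x k)) :
    ∃ t > 0, ¬ FConcaveOn (Phi 0) Ω (fun x => u x t) := by
  have hm1 : 0 < m - 1 := by linarith
  refine exists_not_FConcaveOn_of_strictConvexOn_rate hΩ hΩne hΩpos hu_pos hu_pde
    (g := fun s => Real.exp (s * m)) (g' := fun s => Real.exp (s * m) * m)
    (g'' := fun s => Real.exp (s * m) * m * m) 1 0 hu_init
    (fun s _ => by rw [← Real.exp_mul]) (fun s _ => (hasDerivAt_mul_const m).exp)
    (fun s _ => (hasDerivAt_mul_const m).exp.mul_const m) (fun s _ => by positivity)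
    (fun s _ => by simp [phiReal]) ?_
  refine (strictConvexOn_of_hasDerivAt2_pos (convex_Ioi 0) isOpen_Ioi
    (f := fun s => m * m * Real.exp (s * (m - 1)))
    (fun s _ => (hasDerivAt_mul_const (m - 1)).exp.const_mul (m * m))
    (fun s _ => ((hasDerivAt_mul_const (m - 1)).exp.mul_const (m - 1)).const_mul (m * m))
    (fun s _ => by positivity)).congr fun s _ => ?_
  dsimp only
  rw [← Real.exp_mul, show s * (m - 1) = s * (0 - 1) + s * m by ring, Real.exp_add]
  ring

theorem exists_not_FConcaveOn_of_initial_eq_rpow {n : ℕ} {k : Fin n} {m α : ℝ} (hm : 1 < m)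
    (hα0 : α ≠ 0) (hα : α < (m - 1) / 2)
    {Ω : Set (EuclideanSpace ℝ (Fin n))} (hΩ : IsOpen Ω) (hΩne : Ω.Nonempty)
    (hΩpos : ∀ x ∈ Ω, 0 < x k) {u : EuclideanSpace ℝ (Fin n) → ℝ → ℝ}
    (hu_pos : ∀ x ∈ Ω, ∀ t ∈ Ici (0 : ℝ), 0 < u x t)
    (hu_pde : ∀ x ∈ Ω, derivWithin (u x) (Ici 0) 0 = coordLaplacian (fun y => u y 0 ^ m) x)
    (hu_init : ∀ x ∈ Ω, u x 0 = x k ^ (1 / α)) :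
    ∃ t > 0, ¬ FConcaveOn (Phi α) Ω (fun x => u x t) := by
  set C := m / α * (m / α - 1)
  set β := (m - 1) / α - 1
  have hsigns : 0 < C ∧ 0 < β * (β - 1) := by
    rcases lt_or_gt_of_ne hα0 with hneg | hpos
    · have h1 : m / α < 0 := div_neg_of_pos_of_neg (by linarith) hneg
      have h2 : (m - 1) / α < 0 := div_neg_of_pos_of_neg (by linarith) hneg
      exact ⟨mul_pos_of_neg_of_neg h1 (by linarith), mul_pos_of_neg_of_neg (by linarith)
        (by linarith)⟩
    · have h1 : 2 < (m - 1) / α := (lt_div_iff₀ hpos).2 (by linarith)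
      have h2 : (m - 1) / α < m / α := div_lt_div_of_pos_right (by linarith) hpos
      exact ⟨mul_pos (by linarith) (by linarith), mul_pos (by linarith) (by linarith)⟩
  obtain ⟨hC, hβ⟩ := hsigns
  refine exists_not_FConcaveOn_of_strictConvexOn_rate hΩ hΩne hΩpos hu_pos hu_pde
    (ψ := fun s => s ^ (1 / α)) (g := fun s => s ^ (m / α)) (g' := fun s => m / α * s ^ (m / α - 1))
    (g'' := fun s => m / α * ((m / α - 1) * s ^ (m / α - 1 - 1))) α⁻¹ (-α⁻¹) hu_init
    (fun s hs => by rw [← Real.rpow_mul hs.le]; ring_nf)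
    (fun s hs => Real.hasDerivAt_rpow_const (Or.inl hs.ne'))
    (fun s hs => (Real.hasDerivAt_rpow_const (Or.inl hs.ne')).const_mul (m / α))
    (fun s hs => by rw [← mul_assoc]; exact mul_pos hC (Real.rpow_pos_of_pos hs _))
    (fun s hs => by
      rw [phiReal, if_neg hα0, ← Real.rpow_mul hs.le, one_div_mul_cancel hα0, Real.rpow_one]
      ring) ?_
  refine (strictConvexOn_of_hasDerivAt2_pos (convex_Ioi 0) isOpen_Ioi
    (f := fun s => C * s ^ β)
    (fun s hs => (Real.hasDerivAt_rpow_const (Or.inl (ne_of_gt hs))).const_mul C)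
    (fun s hs => ((Real.hasDerivAt_rpow_const (Or.inl (ne_of_gt hs))).const_mul β).const_mul C)
    fun s hs => by
      rw [show C * (β * ((β - 1) * s ^ (β - 1 - 1))) = C * (β * (β - 1)) * s ^ (β - 1 - 1) by
        ring]
      exact mul_pos (mul_pos hC hβ) (Real.rpow_pos_of_pos hs _)).congr fun s hs => ?_
  have hexp : 1 / α * (α - 1) + (m / α - 1 - 1) = β := by
    simp only [β]; field_simp; ring
  dsimp only
  rw [← Real.rpow_mul (le_of_lt hs), ← hexp, Real.rpow_add hs]
  ring

theorem stmt18_general {n : ℕ} (hn : 0 < n) (m : ℝ) (hm : 1 < m)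
    (α : ℝ) (hα : α < (m - 1) / 2)
    (Ω : Set (EuclideanSpace ℝ (Fin n)))
    (hΩopen : IsOpen Ω) (hΩne : Ω.Nonempty)
    (hΩpos : ∀ x ∈ Ω, 0 < x ⟨0, hn⟩)
    (φ : EuclideanSpace ℝ (Fin n) → ℝ)
    (hφ : ∀ x ∈ Ω, φ x =
      if α = 0 then Real.exp (x ⟨0, hn⟩) else (x ⟨0, hn⟩) ^ (1/α))
    (u : EuclideanSpace ℝ (Fin n) → ℝ → ℝ)
    (hu_pos : ∀ x ∈ Ω, ∀ t ∈ Ici (0:ℝ), 0 < u x t)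
    (hu_pde : ∀ x ∈ Ω, ∀ t ∈ Ici (0:ℝ),
      derivWithin (fun s => u x s) (Ici 0) t =
        ∑ i : Fin n,
          fderiv ℝ (fun y => fderiv ℝ (fun z => (u z t) ^ m) y
            (EuclideanSpace.single i 1)) x (EuclideanSpace.single i 1))
    (hu_init : ∀ x ∈ Ω, u x 0 = φ x) :
    ∃ t > (0:ℝ), ¬ FConcaveOn (Phi α) Ω (fun x => u x t) := by
  have hu_pde₀ : ∀ x ∈ Ω,
      derivWithin (u x) (Ici 0) 0 = coordLaplacian (fun y => u y 0 ^ m) x :=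
    fun x hx => hu_pde x hx 0 self_mem_Ici
  by_cases hα0 : α = 0
  · subst hα0
    exact exists_not_FConcaveOn_of_initial_eq_exp hm hΩopen hΩne hΩpos hu_pos hu_pde₀
      fun x hx => by rw [hu_init x hx, hφ x hx, if_pos rfl]
  · exact exists_not_FConcaveOn_of_initial_eq_rpow hm hα0 hα hΩopen hΩne hΩpos hu_pos hu_pde₀
      fun x hx => by rw [hu_init x hx, hφ x hx, if_neg hα0]

/-- disruption of `α`-concavity, `α < (m-1)/2`, for the porous
medium equation `∂_t u = Δ(u^m)`: with the `α`-concave initial datum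
`φ(x) = ⟨e₁,x⟩^{1/α}` (resp. `e^{⟨e₁,x⟩}` for `α = 0`) on a bounded convex domain
`Ω` with `⟨e₁,x⟩ > 0` on `Ω`, any positive solution `u` of class `C^{2;1}` on
`Ω × [0,∞)` fails to be `α`-concave at some time `t > 0`. -/
theorem stmt18 {n : ℕ} (hn : 0 < n) (m : ℝ) (hm : 1 < m)
    (α : ℝ) (hα : α < (m - 1) / 2)
    (Ω : Set (EuclideanSpace ℝ (Fin n)))
    (hΩconv : Convex ℝ Ω) (hΩopen : IsOpen Ω) (hΩne : Ω.Nonempty)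
    (hΩbdd : Bornology.IsBounded Ω)
    (hΩpos : ∀ x ∈ Ω, 0 < x ⟨0, hn⟩)
    (φ : EuclideanSpace ℝ (Fin n) → ℝ)
    (hφ : ∀ x ∈ Ω, φ x =
      if α = 0 then Real.exp (x ⟨0, hn⟩) else (x ⟨0, hn⟩) ^ (1/α))
    (u : EuclideanSpace ℝ (Fin n) → ℝ → ℝ)
    (hu_pos : ∀ x ∈ Ω, ∀ t ∈ Ici (0:ℝ), 0 < u x t)
    (hu_cont : ContinuousOn (fun p : EuclideanSpace ℝ (Fin n) × ℝ => u p.1 p.2)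
      (Ω ×ˢ Ici 0))
    (hu_cont1 : ∀ i : Fin n,
      ContinuousOn (fun p : EuclideanSpace ℝ (Fin n) × ℝ =>
        fderiv ℝ (fun y => u y p.2) p.1 (EuclideanSpace.single i 1)) (Ω ×ˢ Ici 0))
    (hu_cont2 : ∀ i j : Fin n,
      ContinuousOn (fun p : EuclideanSpace ℝ (Fin n) × ℝ =>
        fderiv ℝ (fun y => fderiv ℝ (fun z => u z p.2) y (EuclideanSpace.single i 1))
          p.1 (EuclideanSpace.single j 1)) (Ω ×ˢ Ici 0))
    (hu_contt : ContinuousOn (fun p : EuclideanSpace ℝ (Fin n) × ℝ =>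
        derivWithin (fun s => u p.1 s) (Ici 0) p.2) (Ω ×ˢ Ici 0))
    (hu_pde : ∀ x ∈ Ω, ∀ t ∈ Ici (0:ℝ),
      derivWithin (fun s => u x s) (Ici 0) t =
        ∑ i : Fin n,
          fderiv ℝ (fun y => fderiv ℝ (fun z => (u z t) ^ m) y
            (EuclideanSpace.single i 1)) x (EuclideanSpace.single i 1))
    (hu_init : ∀ x ∈ Ω, u x 0 = φ x) :
    ∃ t > (0:ℝ), ¬ FConcaveOn (Phi α) Ω (fun x => u x t) :=
  stmt18_general hn m hm α hα Ω hΩopen hΩne hΩpos φ hφ u hu_pos hu_pde hu_init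
end
end

section
/- Let n ≥ 1, p > 2, and α ∈ (-∞, (p-2)/p). Let Ω be a bounded convex domain in ℝⁿ such that ⟨e₁,x⟩ > 0 for every x ∈ Ω, where e₁ is the first standard basis vector. Define φ : Ω → (0,∞) by φ(x) := ⟨e₁,x⟩^{1/α} if α ≠ 0 and φ(x) := e^{⟨e₁,x⟩} if α = 0 (so φ is α-concave in Ω). Suppose u : Ω × [0,∞) → ℝ is positive, u together with its first and second spatial partial derivatives and its time derivative is continuous on Ω × [0,∞), the spatial gradient ∇u(x,t) is nonzero for all (x,t) ∈ Ω × [0,∞), u satisfies the parabolic p-Laplace equation ∂_t u = div(|∇u|^{p-2}∇u) pointwise on Ω × [0,∞), and u(·,0) = φ. Then there exists t > 0 such that u(·,t) is not α-concave in Ω. -/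
open Set Filter
open scoped Topology

noncomputable section

/-!
At `t = 0` the datum `h(x₁)` depends on one coordinate, so the equation gives
`∂ₜu(x,0) = Q'(x₁)` with `Q = |h'|^{p-2} h'` the one-dimensional flux of the profile `h`.
Since `Φ_α ∘ h` is affine, the concavity defect of `Φ_α(u(·,t))` at the midpoint of a segment in
the `e₁`-direction vanishes at `t = 0`; if `u(·,t)` stayed `α`-concave it would be nonnegative
for `t > 0`, so the initial velocity `Φ_α'(h(x₁)) Q'(x₁)` would be midpoint concave. But this
velocity is `(p-1) e^{(p-2)x₁}`, resp. a positive multiple of `x₁^γ` with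
`γ = (p-2)/α - (p-1) ∉ [0,1]`, which is strictly convex.
-/

theorem HasDerivWithinAt.nonneg_of_isMinOn_Ici {f : ℝ → ℝ} {f' a : ℝ}
    (hf : HasDerivWithinAt f f' (Ici a) a) (hmin : IsMinOn f (Ici a) a) : 0 ≤ f' := by
  have hcone : (1 : ℝ) ∈ posTangentConeAt (Ici a) a :=
    mem_posTangentConeAt_of_segment_subset <| by
      rw [segment_eq_Icc (by linarith)]; exact Icc_subset_Ici_self
  simpa using hmin.localize.hasFDerivWithinAt_nonneg hf.hasFDerivWithinAt hcone

theorem StrictConvexOn.const_mul_of_pos {E : Type*} [AddCommGroup E] [Module ℝ E]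
    {s : Set E} {f : E → ℝ} {c : ℝ} (hc : 0 < c) (hf : StrictConvexOn ℝ s f) :
    StrictConvexOn ℝ s fun x => c * f x := by
  refine ⟨hf.1, fun x hx y hy hxy a b ha hb hab => ?_⟩
  have := mul_lt_mul_of_pos_left (hf.2 hx hy hxy ha hb hab) hc
  simp only [smul_eq_mul] at this ⊢
  linarith

theorem StrictConvexOn.comp_const_mul {f : ℝ → ℝ} {c : ℝ} (hc : c ≠ 0)
    (hf : StrictConvexOn ℝ univ f) : StrictConvexOn ℝ univ fun t => f (c * t) := by
  refine ⟨convex_univ, fun x _ y _ hxy a b ha hb hab => ?_⟩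
  have hcxy : c * x ≠ c * y := by simpa [hc] using hxy
  simpa [smul_eq_mul, mul_add, mul_left_comm] using
    hf.2 (mem_univ _) (mem_univ _) hcxy ha hb hab

theorem strictConvexOn_rpow_Ioi {γ : ℝ} (hγ : 0 < γ * (γ - 1)) :
    StrictConvexOn ℝ (Ioi 0) fun x : ℝ => x ^ γ := by
  refine strictConvexOn_of_deriv2_pos' (convex_Ioi 0)
    (fun x hx => (Real.continuousAt_rpow_const x γ (Or.inl (ne_of_gt hx))).continuousWithinAt)
    fun x hx => ?_
  rw [Real.iter_deriv_rpow_const]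
  have : (descPochhammer ℝ 2).eval γ = γ * (γ - 1) := by
    simp [descPochhammer_succ_right]
  rw [this]
  exact mul_pos hγ (Real.rpow_pos_of_pos hx _)

section FirstVariation

variable {E : Type*} [AddCommGroup E] [Module ℝ E] {F : ℝ → EReal} {Ψ : ℝ → ℝ} {Ω : Set E}

theorem FConcaveOn.combo_le (hF : ∀ r > 0, F r = Ψ r) {f : E → ℝ} (hf : FConcaveOn F Ω f)
    {x y : E} {lam : ℝ} (hx : x ∈ Ω) (hy : y ∈ Ω) (hlam : lam ∈ Ioo (0 : ℝ) 1)
    (hfx : 0 < f x) (hfy : 0 < f y) (hfm : 0 < f ((1 - lam) • x + lam • y)) :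
    (1 - lam) * Ψ (f x) + lam * Ψ (f y) ≤ Ψ (f ((1 - lam) • x + lam • y)) := by
  have := hf x hx y hy lam hlam
  rwa [hF _ hfx, hF _ hfy, hF _ hfm, ← EReal.coe_mul, ← EReal.coe_mul, ← EReal.coe_add,
    EReal.coe_le_coe_iff] at this

theorem combo_velocity_le_of_forall_fConcaveOn (hF : ∀ r > 0, F r = Ψ r) {Ψ' : ℝ → ℝ}
    (hΨ : ∀ r > 0, HasDerivAt Ψ (Ψ' r) r) {u : E → ℝ → ℝ} {v : E → ℝ}
    (hu_pos : ∀ z ∈ Ω, ∀ t ∈ Ici (0 : ℝ), 0 < u z t)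
    (hv : ∀ z ∈ Ω, HasDerivWithinAt (u z) (v z) (Ici 0) 0)
    (hconc : ∀ t > 0, FConcaveOn F Ω fun z => u z t)
    {x y : E} {lam : ℝ} (hx : x ∈ Ω) (hy : y ∈ Ω) (hlam : lam ∈ Ioo (0 : ℝ) 1)
    (hm : (1 - lam) • x + lam • y ∈ Ω)
    (haffine : (1 - lam) * Ψ (u x 0) + lam * Ψ (u y 0) = Ψ (u ((1 - lam) • x + lam • y) 0)) :
    (1 - lam) * (Ψ' (u x 0) * v x) + lam * (Ψ' (u y 0) * v y) ≤
      Ψ' (u ((1 - lam) • x + lam • y) 0) * v ((1 - lam) • x + lam • y) := by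
  set m := (1 - lam) • x + lam • y
  have hcomp : ∀ z ∈ Ω, HasDerivWithinAt (fun t => Ψ (u z t)) (Ψ' (u z 0) * v z) (Ici 0) 0 :=
    fun z hz => (hΨ _ (hu_pos z hz 0 self_mem_Ici)).comp_hasDerivWithinAt 0 (hv z hz)
  set defect := fun t => Ψ (u m t) - ((1 - lam) * Ψ (u x t) + lam * Ψ (u y t))
  have hdefect : HasDerivWithinAt defect (Ψ' (u m 0) * v m -
      ((1 - lam) * (Ψ' (u x 0) * v x) + lam * (Ψ' (u y 0) * v y))) (Ici 0) 0 :=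
    (hcomp m hm).sub (((hcomp x hx).const_mul _).add ((hcomp y hy).const_mul _))
  have hmin : IsMinOn defect (Ici 0) 0 := by
    intro t ht
    rcases (mem_Ici.1 ht).eq_or_lt with rfl | htpos
    · exact le_refl (defect 0)
    · have := (hconc t htpos).combo_le hF hx hy hlam (hu_pos x hx t ht) (hu_pos y hy t ht)
        (hu_pos m hm t ht)
      show defect 0 ≤ defect t
      simp only [defect]
      linarith
  linarith [hdefect.nonneg_of_isMinOn_Ici hmin]

end FirstVariation

theorem hasFDerivAt_comp_apply {ι : Type*} [Fintype ι] {g : ℝ → ℝ} {g' : ℝ}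
    {x : EuclideanSpace ℝ ι} (i : ι) (hg : HasDerivAt g g' (x i)) :
    HasFDerivAt (fun y : EuclideanSpace ℝ ι => g (y i)) (g' • EuclideanSpace.proj (𝕜 := ℝ) i) x :=
  hg.comp_hasFDerivAt x (EuclideanSpace.proj (𝕜 := ℝ) i).hasFDerivAt

section PLaplacian

variable {ι : Type*} [Fintype ι] [DecidableEq ι]

def pLaplacian (p : ℝ) (f : EuclideanSpace ℝ ι → ℝ) (x : EuclideanSpace ℝ ι) : ℝ :=
  ∑ j, fderiv ℝ (fun y => ‖gradient f y‖ ^ (p - 2) * fderiv ℝ f y (EuclideanSpace.single j 1))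
    x (EuclideanSpace.single j 1)

theorem norm_gradient_of_hasFDerivAt_smul_proj {f : EuclideanSpace ℝ ι → ℝ}
    {c : ℝ} {x : EuclideanSpace ℝ ι} {i : ι}
    (hf : HasFDerivAt f (c • EuclideanSpace.proj (𝕜 := ℝ) i) x) :
    ‖gradient f x‖ = |c| := by
  have : gradient f x = c • EuclideanSpace.single i 1 := by
    refine (hasGradientAt_iff_hasFDerivAt.2 (hf.congr_fderiv ?_)).gradient
    ext w
    simp [EuclideanSpace.inner_single_left]
  rw [this, norm_smul, PiLp.norm_single, norm_one, mul_one, Real.norm_eq_abs]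

theorem pLaplacian_eq_of_eventuallyEq_comp_apply {p : ℝ}
    {f : EuclideanSpace ℝ ι → ℝ} {x : EuclideanSpace ℝ ι} {i : ι} {g g' : ℝ → ℝ} {q : ℝ}
    (hf : f =ᶠ[𝓝 x] fun y => g (y i)) (hg : ∀ᶠ t in 𝓝 (x i), HasDerivAt g (g' t) t)
    (hq : HasDerivAt (fun t => |g' t| ^ (p - 2) * g' t) q (x i)) :
    pLaplacian p f x = q := by
  have hderiv : ∀ᶠ y in 𝓝 x, HasFDerivAt f (g' (y i) • EuclideanSpace.proj (𝕜 := ℝ) i) y := by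
    filter_upwards [hf.eventuallyEq_nhds,
      ((EuclideanSpace.proj i).continuous.tendsto x).eventually hg] with y hfy hgy
    exact (hasFDerivAt_comp_apply i hgy).congr_of_eventuallyEq hfy
  have hterm : ∀ j, fderiv ℝ (fun y => ‖gradient f y‖ ^ (p - 2) *
      fderiv ℝ f y (EuclideanSpace.single j 1)) x (EuclideanSpace.single j 1) =
        if i = j then q else 0 := by
    intro j
    have hsummand : (fun y => ‖gradient f y‖ ^ (p - 2) *
        fderiv ℝ f y (EuclideanSpace.single j 1)) =ᶠ[𝓝 x]
        fun y => (|g' (y i)| ^ (p - 2) * g' (y i)) *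
          (EuclideanSpace.single j (1 : ℝ) : EuclideanSpace ℝ ι) i := by
      filter_upwards [hderiv] with y hy
      rw [norm_gradient_of_hasFDerivAt_smul_proj hy, hy.fderiv]
      simp
    rw [hsummand.fderiv_eq, ((hasFDerivAt_comp_apply i hq).mul_const _).fderiv]
    rcases eq_or_ne i j with rfl | hij <;> simp [*]
  simp [pLaplacian, hterm]

end PLaplacian

section CoordinateProfile

variable {ι : Type*} [Fintype ι] [DecidableEq ι] {i : ι} {Ω : Set (EuclideanSpace ℝ ι)} {p : ℝ}
  {u : EuclideanSpace ℝ ι → ℝ → ℝ}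

theorem hasDerivWithinAt_zero_of_coord_profile (hΩ : IsOpen Ω) (hΩpos : ∀ x ∈ Ω, 0 < x i)
    (hu_pde : ∀ x ∈ Ω, derivWithin (u x) (Ici 0) 0 = pLaplacian p (fun z => u z 0) x)
    {h h' Q' : ℝ → ℝ} (hu_init : ∀ x ∈ Ω, u x 0 = h (x i))
    (hh : ∀ t > 0, HasDerivAt h (h' t) t)
    (hQ : ∀ t > 0, HasDerivAt (fun s => |h' s| ^ (p - 2) * h' s) (Q' t) t)
    (hQ_ne : ∀ t > 0, Q' t ≠ 0) {z : EuclideanSpace ℝ ι} (hz : z ∈ Ω) :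
    HasDerivWithinAt (u z) (Q' (z i)) (Ici 0) 0 := by
  have hΔ : derivWithin (u z) (Ici 0) 0 = Q' (z i) := by
    rw [hu_pde z hz]
    exact pLaplacian_eq_of_eventuallyEq_comp_apply
      (eventually_of_mem (hΩ.mem_nhds hz) hu_init)
      (eventually_of_mem (Ioi_mem_nhds (hΩpos z hz)) hh) (hQ _ (hΩpos z hz))
  -- `derivWithin` is `0` where `u z` is not differentiable, so differentiability at `t = 0`
  -- comes from `Q' ≠ 0`.
  rw [← hΔ]
  exact (differentiableWithinAt_of_derivWithin_ne_zero
    (hΔ ▸ hQ_ne _ (hΩpos z hz))).hasDerivWithinAt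

theorem exists_not_fConcaveOn_of_coord_profile (hΩ : IsOpen Ω) (hΩne : Ω.Nonempty)
    (hΩpos : ∀ x ∈ Ω, 0 < x i) (hu_pos : ∀ x ∈ Ω, ∀ t ∈ Ici (0 : ℝ), 0 < u x t)
    (hu_pde : ∀ x ∈ Ω, derivWithin (u x) (Ici 0) 0 = pLaplacian p (fun z => u z 0) x)
    {h h' Q' : ℝ → ℝ} (hu_init : ∀ x ∈ Ω, u x 0 = h (x i))
    (hh : ∀ t > 0, HasDerivAt h (h' t) t)
    (hQ : ∀ t > 0, HasDerivAt (fun s => |h' s| ^ (p - 2) * h' s) (Q' t) t)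
    (hQ_ne : ∀ t > 0, Q' t ≠ 0) {F : ℝ → EReal} {Ψ Ψ' : ℝ → ℝ} (hF : ∀ r > 0, F r = Ψ r)
    (hΨ : ∀ r > 0, HasDerivAt Ψ (Ψ' r) r) {A B : ℝ} (hΨh : ∀ t > 0, Ψ (h t) = A * t + B)
    (hconv : StrictConvexOn ℝ (Ioi 0) fun t => Ψ' (h t) * Q' t) :
    ∃ t > 0, ¬ FConcaveOn F Ω fun x => u x t := by
  by_contra! hconc
  have hv : ∀ z ∈ Ω, HasDerivWithinAt (u z) (Q' (z i)) (Ici 0) 0 := fun z hz =>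
    hasDerivWithinAt_zero_of_coord_profile hΩ hΩpos hu_pde hu_init hh hQ hQ_ne hz
  obtain ⟨a, ha⟩ := hΩne
  set e : EuclideanSpace ℝ ι := EuclideanSpace.single i 1
  obtain ⟨δ, hδ, hxΩ, hyΩ⟩ : ∃ δ : ℝ, 0 < δ ∧ a - δ • e ∈ Ω ∧ a + δ • e ∈ Ω := by
    obtain ⟨r, hr, hball⟩ := Metric.isOpen_iff.1 hΩ a ha
    refine ⟨r / 2, by positivity, hball ?_, hball ?_⟩ <;>
      simpa [e, norm_smul, abs_of_pos hr] using hr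
  have hx_i : (a - δ • e) i = a i - δ := by simp [e]
  have hy_i : (a + δ • e) i = a i + δ := by simp [e]
  have hx_pos : 0 < a i - δ := hx_i ▸ hΩpos _ hxΩ
  have hy_pos : 0 < a i + δ := by linarith
  have hmid : (1 - 1 / 2 : ℝ) • (a - δ • e) + (1 / 2 : ℝ) • (a + δ • e) = a := by module
  have hvelocity := combo_velocity_le_of_forall_fConcaveOn hF hΨ hu_pos hv hconc hxΩ hyΩ
    (lam := 1 / 2) (by norm_num) (by rwa [hmid]) (by
      rw [hmid, hu_init _ hxΩ, hu_init _ hyΩ, hu_init _ ha, hx_i, hy_i, hΨh _ hx_pos,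
        hΨh _ hy_pos, hΨh _ (hΩpos _ ha)]
      ring)
  rw [hmid, hu_init _ hxΩ, hu_init _ hyΩ, hu_init _ ha, hx_i, hy_i] at hvelocity
  have hstrict := hconv.2 (mem_Ioi.2 hx_pos) (mem_Ioi.2 hy_pos) (by linarith : a i - δ ≠ a i + δ)
    (by norm_num : (0 : ℝ) < 1 / 2) (by norm_num : (0 : ℝ) < 1 / 2) (by norm_num)
  simp only [smul_eq_mul] at hstrict
  rw [show 1 / 2 * (a i - δ) + 1 / 2 * (a i + δ) = a i by ring] at hstrict
  linarith

theorem exists_not_fConcaveOn_exp_profile (hΩ : IsOpen Ω) (hΩne : Ω.Nonempty)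
    (hΩpos : ∀ x ∈ Ω, 0 < x i) (hp : 2 < p) (hu_pos : ∀ x ∈ Ω, ∀ t ∈ Ici (0 : ℝ), 0 < u x t)
    (hu_pde : ∀ x ∈ Ω, derivWithin (u x) (Ici 0) 0 = pLaplacian p (fun z => u z 0) x)
    (hu_init : ∀ x ∈ Ω, u x 0 = Real.exp (x i)) :
    ∃ t > 0, ¬ FConcaveOn (Phi 0) Ω fun x => u x t := by
  have hflux :
      (fun s => |Real.exp s| ^ (p - 2) * Real.exp s) = fun s => Real.exp ((p - 1) * s) := by
    funext s
    rw [abs_of_pos (Real.exp_pos s), ← Real.exp_mul, ← Real.exp_add]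
    ring_nf
  have hweight : ∀ t, (Real.exp t)⁻¹ * ((p - 1) * Real.exp ((p - 1) * t)) =
      (p - 1) * Real.exp ((p - 2) * t) := by
    intro t
    rw [← Real.exp_neg, mul_left_comm, ← Real.exp_add]
    ring_nf
  have hp1 : 0 < p - 1 := by linarith
  refine exists_not_fConcaveOn_of_coord_profile hΩ hΩne hΩpos hu_pos hu_pde hu_init
    (fun t _ => Real.hasDerivAt_exp t) (Q' := fun t => (p - 1) * Real.exp ((p - 1) * t))
    (fun t _ => ?_) (fun t _ => by positivity)
    (Ψ := Real.log) (fun r hr => by simp [Phi, not_le.2 hr])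
    (fun r hr => Real.hasDerivAt_log hr.ne') (A := 1) (B := 0) (fun t _ => by simp) ?_
  · rw [hflux]
    simpa [mul_comm] using ((hasDerivAt_id t).const_mul (p - 1)).exp
  · have hconv := (strictConvexOn_exp.comp_const_mul (by linarith : p - 2 ≠ 0)).const_mul_of_pos hp1
    exact (hconv.subset (subset_univ _) (convex_Ioi 0)).congr fun t _ => (hweight t).symm

theorem exists_not_fConcaveOn_rpow_profile (hΩ : IsOpen Ω) (hΩne : Ω.Nonempty)
    (hΩpos : ∀ x ∈ Ω, 0 < x i) (hp : 2 < p) {α : ℝ} (hα : α < (p - 2) / p) (hα0 : α ≠ 0)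
    (hu_pos : ∀ x ∈ Ω, ∀ t ∈ Ici (0 : ℝ), 0 < u x t)
    (hu_pde : ∀ x ∈ Ω, derivWithin (u x) (Ici 0) 0 = pLaplacian p (fun z => u z 0) x)
    (hu_init : ∀ x ∈ Ω, u x 0 = x i ^ (1 / α)) :
    ∃ t > 0, ¬ FConcaveOn (Phi α) Ω fun x => u x t := by
  set β := 1 / α
  have hβα : β * α = 1 := one_div_mul_cancel hα0
  set c := |β| ^ (p - 2) * β
  set m := (β - 1) * (p - 1) with hm
  have hγ : m - β = β * (p - 2) - (p - 1) := by rw [hm]; ring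
  -- `α < (p - 2) / p` is exactly what puts the weight exponent `m - β` outside `[0, 1]`.
  have hexp : 0 < β * (β - 1) ∧ 0 < (m - β) * (m - β - 1) := by
    rcases hα0.lt_or_gt with hneg | hpos
    · have hβ : β < 0 := one_div_neg.2 hneg
      exact ⟨mul_pos_of_neg_of_neg hβ (by linarith),
        mul_pos_of_neg_of_neg (by nlinarith) (by nlinarith)⟩
    · have hβ : 0 < β := one_div_pos.2 hpos
      have hαp : α * p < p - 2 := (lt_div_iff₀ (by linarith)).1 hα
      have hβp : p < β * (p - 2) := by nlinarith
      exact ⟨mul_pos hβ (by nlinarith), mul_pos (by linarith) (by linarith)⟩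
  have hC : 0 < c * m := by
    have : c * m = |β| ^ (p - 2) * (β * (β - 1)) * (p - 1) := by ring
    rw [this]
    have : 0 < |β| ^ (p - 2) := Real.rpow_pos_of_pos (abs_pos.2 (one_div_ne_zero hα0)) _
    have : 0 < p - 1 := by linarith
    have := hexp.1
    positivity
  have hflux : ∀ s > 0, |β * s ^ (β - 1)| ^ (p - 2) * (β * s ^ (β - 1)) = c * s ^ m := by
    intro s hs
    have hpow : 0 < s ^ (β - 1) := Real.rpow_pos_of_pos hs _
    rw [abs_mul, abs_of_pos hpow, Real.mul_rpow (abs_nonneg β) hpow.le, ← Real.rpow_mul hs.le,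
      show m = (β - 1) * (p - 2) + (β - 1) by ring, Real.rpow_add hs]
    ring
  have hweight : ∀ t > 0, (t ^ β) ^ (α - 1) * (c * (m * t ^ (m - 1))) = c * m * t ^ (m - β) := by
    intro t ht
    rw [← Real.rpow_mul ht.le, show β * (α - 1) = 1 - β by rw [mul_sub, hβα, mul_one],
      show m - β = (1 - β) + (m - 1) by ring, Real.rpow_add ht]
    ring
  refine exists_not_fConcaveOn_of_coord_profile hΩ hΩne hΩpos hu_pos hu_pde hu_init
    (fun t ht => Real.hasDerivAt_rpow_const (Or.inl ht.ne'))
    (Q' := fun t => c * (m * t ^ (m - 1))) (fun t ht => ?_) (fun t ht => ?_)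
    (Ψ := fun r => (r ^ α - 1) / α) (Ψ' := fun r => r ^ (α - 1))
    (fun r hr => by simp [Phi, not_le.2 hr, hα0]) (fun r hr => ?_) (A := β) (B := -β)
    (fun t ht => ?_) ?_
  · exact ((Real.hasDerivAt_rpow_const (Or.inl ht.ne')).const_mul c).congr_of_eventuallyEq
      (eventually_of_mem (Ioi_mem_nhds ht) hflux)
  · have : c * (m * t ^ (m - 1)) = c * m * t ^ (m - 1) := by ring
    rw [this]
    exact (mul_pos hC (Real.rpow_pos_of_pos ht _)).ne'
  · simpa [mul_div_cancel_left₀ _ hα0] using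
      ((Real.hasDerivAt_rpow_const (p := α) (Or.inl hr.ne')).sub_const 1).div_const α
  · rw [← Real.rpow_mul ht.le, hβα, Real.rpow_one]
    ring
  · exact ((strictConvexOn_rpow_Ioi hexp.2).const_mul_of_pos hC).congr
      fun t ht => (hweight t ht).symm

end CoordinateProfile

theorem stmt19_general {n : ℕ} (hn : 0 < n) (p : ℝ) (hp : 2 < p)
    (α : ℝ) (hα : α < (p - 2) / p)
    (Ω : Set (EuclideanSpace ℝ (Fin n)))
    (hΩopen : IsOpen Ω) (hΩne : Ω.Nonempty)
    (hΩpos : ∀ x ∈ Ω, 0 < x ⟨0, hn⟩)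
    (φ : EuclideanSpace ℝ (Fin n) → ℝ)
    (hφ : ∀ x ∈ Ω, φ x =
      if α = 0 then Real.exp (x ⟨0, hn⟩) else (x ⟨0, hn⟩) ^ (1/α))
    (u : EuclideanSpace ℝ (Fin n) → ℝ → ℝ)
    (hu_pos : ∀ x ∈ Ω, ∀ t ∈ Ici (0:ℝ), 0 < u x t)
    (hu_pde : ∀ x ∈ Ω, ∀ t ∈ Ici (0:ℝ),
      derivWithin (fun s => u x s) (Ici 0) t =
        ∑ i : Fin n,
          fderiv ℝ (fun y =>
              ‖gradient (fun z => u z t) y‖ ^ (p - 2) *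
                fderiv ℝ (fun z => u z t) y (EuclideanSpace.single i 1))
            x (EuclideanSpace.single i 1))
    (hu_init : ∀ x ∈ Ω, u x 0 = φ x) :
    ∃ t > (0:ℝ), ¬ FConcaveOn (Phi α) Ω (fun x => u x t) := by
  have hu_pde₀ : ∀ x ∈ Ω, derivWithin (u x) (Ici 0) 0 = pLaplacian p (fun z => u z 0) x :=
    fun x hx => hu_pde x hx 0 self_mem_Ici
  rcases eq_or_ne α 0 with rfl | hα0
  · exact exists_not_fConcaveOn_exp_profile hΩopen hΩne hΩpos hp hu_pos hu_pde₀
      fun x hx => by rw [hu_init x hx, hφ x hx, if_pos rfl]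
  · exact exists_not_fConcaveOn_rpow_profile hΩopen hΩne hΩpos hp hα hα0 hu_pos hu_pde₀
      fun x hx => by rw [hu_init x hx, hφ x hx, if_neg hα0]

/-- disruption of `α`-concavity, `α < (p-2)/p`, for the parabolic
`p`-Laplace equation `∂_t u = div(|∇u|^{p-2}∇u)`: with the `α`-concave initial
datum `φ(x) = ⟨e₁,x⟩^{1/α}` (resp. `e^{⟨e₁,x⟩}` for `α = 0`) on a bounded convex
domain `Ω` with `⟨e₁,x⟩ > 0` on `Ω`, any positive solution `u` of class `C^{2;1}`
on `Ω × [0,∞)` with nonvanishing spatial gradient fails to be `α`-concave at some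
time `t > 0`. -/
theorem stmt19 {n : ℕ} (hn : 0 < n) (p : ℝ) (hp : 2 < p)
    (α : ℝ) (hα : α < (p - 2) / p)
    (Ω : Set (EuclideanSpace ℝ (Fin n)))
    (hΩconv : Convex ℝ Ω) (hΩopen : IsOpen Ω) (hΩne : Ω.Nonempty)
    (hΩbdd : Bornology.IsBounded Ω)
    (hΩpos : ∀ x ∈ Ω, 0 < x ⟨0, hn⟩)
    (φ : EuclideanSpace ℝ (Fin n) → ℝ)
    (hφ : ∀ x ∈ Ω, φ x =
      if α = 0 then Real.exp (x ⟨0, hn⟩) else (x ⟨0, hn⟩) ^ (1/α))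
    (u : EuclideanSpace ℝ (Fin n) → ℝ → ℝ)
    (hu_pos : ∀ x ∈ Ω, ∀ t ∈ Ici (0:ℝ), 0 < u x t)
    (hu_grad : ∀ x ∈ Ω, ∀ t ∈ Ici (0:ℝ), gradient (fun z => u z t) x ≠ 0)
    (hu_cont : ContinuousOn (fun p : EuclideanSpace ℝ (Fin n) × ℝ => u p.1 p.2)
      (Ω ×ˢ Ici 0))
    (hu_cont1 : ∀ i : Fin n,
      ContinuousOn (fun q : EuclideanSpace ℝ (Fin n) × ℝ =>
        fderiv ℝ (fun y => u y q.2) q.1 (EuclideanSpace.single i 1)) (Ω ×ˢ Ici 0))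
    (hu_cont2 : ∀ i j : Fin n,
      ContinuousOn (fun q : EuclideanSpace ℝ (Fin n) × ℝ =>
        fderiv ℝ (fun y => fderiv ℝ (fun z => u z q.2) y (EuclideanSpace.single i 1))
          q.1 (EuclideanSpace.single j 1)) (Ω ×ˢ Ici 0))
    (hu_contt : ContinuousOn (fun q : EuclideanSpace ℝ (Fin n) × ℝ =>
        derivWithin (fun s => u q.1 s) (Ici 0) q.2) (Ω ×ˢ Ici 0))
    (hu_pde : ∀ x ∈ Ω, ∀ t ∈ Ici (0:ℝ),
      derivWithin (fun s => u x s) (Ici 0) t =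
        ∑ i : Fin n,
          fderiv ℝ (fun y =>
              ‖gradient (fun z => u z t) y‖ ^ (p - 2) *
                fderiv ℝ (fun z => u z t) y (EuclideanSpace.single i 1))
            x (EuclideanSpace.single i 1))
    (hu_init : ∀ x ∈ Ω, u x 0 = φ x) :
    ∃ t > (0:ℝ), ¬ FConcaveOn (Phi α) Ω (fun x => u x t) :=
  stmt19_general hn p hp α hα Ω hΩopen hΩne hΩpos φ hφ u hu_pos hu_pde hu_init
end
end
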